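/- arXiv:1904.03248 — 7 statements merged into one kernel-verified Lean document; each statement's English description precedes it below -/
import Mathlib

section
/- Let n be an even positive integer, let C be the cycle graph on n vertices, and let s, t be two vertices at distance n/2 in C (diametrically opposite). Any deterministic algorithm A that, on input a graph, outputs an edge set forming a shortest s–t path (when one exists) satisfies: the expectation over a uniformly random edge e of C of the Hamming distance between A(C) and A(C − e) is at least n/4. -/
/-!
Write `X = A E`. Deleting an edge of `P` moves the output to `Q`, deleting one of `Q` moves it
to `P`, so the total change is `|P| · |X ∆ Q| + |Q| · |X ∆ P|`. Since `|P| = |Q| = n/2` and the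
Hamming distance satisfies the triangle inequality, this is at least
`(n/2) · |P ∆ Q| = (n/2) · n`, i.e. the average over the `n` edges is at least `n/2`.
-/

open Finset
open scoped symmDiff

namespace Finset

variable {α : Type*} [DecidableEq α]

theorem card_symmDiff_le_add (s t u : Finset α) : #(s ∆ u) ≤ #(s ∆ t) + #(t ∆ u) :=
  (card_le_card (symmDiff_triangle s t u)).trans (card_union_le _ _)

theorem sum_card_symmDiff_of_swap {P Q : Finset α} (hPQ : Disjoint P Q) (X : Finset α)
    (f : α → Finset α) (hfP : ∀ e ∈ P, f e = Q) (hfQ : ∀ e ∈ Q, f e = P) :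
    ∑ e ∈ P ∪ Q, #(X ∆ f e) = #P * #(X ∆ Q) + #Q * #(X ∆ P) := by
  rw [sum_union hPQ, sum_const_nat fun e he => by rw [hfP e he],
    sum_const_nat fun e he => by rw [hfQ e he]]

theorem mul_card_union_le_sum_card_symmDiff_of_swap {P Q : Finset α} (hPQ : Disjoint P Q)
    (hcard : #P = #Q) (X : Finset α) (f : α → Finset α)
    (hfP : ∀ e ∈ P, f e = Q) (hfQ : ∀ e ∈ Q, f e = P) :
    #P * #(P ∪ Q) ≤ ∑ e ∈ P ∪ Q, #(X ∆ f e) := by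
  have htriangle : #(P ∪ Q) ≤ #(X ∆ Q) + #(X ∆ P) := by
    rw [← sup_eq_union, ← hPQ.symmDiff_eq_sup, symmDiff_comm X P]
    exact (card_symmDiff_le_add P X Q).trans_eq (add_comm _ _)
  rw [sum_card_symmDiff_of_swap hPQ X f hfP hfQ, ← hcard, ← mul_add]
  exact Nat.mul_le_mul_left _ htriangle

end Finset

theorem stmt1_general {α : Type*} [DecidableEq α] (n : ℕ) (hne : Even n)
    (E P Q : Finset α) (A : Finset α → Finset α)
    (hPQdisj : Disjoint P Q) (hPQunion : P ∪ Q = E)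
    (hPcard : P.card = n / 2) (hQcard : Q.card = n / 2)
    (hAP : ∀ e ∈ P, A (E.erase e) = Q)
    (hAQ : ∀ e ∈ Q, A (E.erase e) = P) :
    (n : ℝ) / 4 ≤ (∑ e ∈ E, ((symmDiff (A E) (A (E.erase e))).card : ℝ)) / (E.card : ℝ) := by
  subst hPQunion
  obtain ⟨m, rfl⟩ := hne
  have hm : #P = m := by omega
  have hEcard : #(P ∪ Q) = m + m := by rw [card_union_of_disjoint hPQdisj, hPcard, hQcard]; omega
  have hbound := mul_card_union_le_sum_card_symmDiff_of_swap hPQdisj (hPcard.trans hQcard.symm)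
    (A (P ∪ Q)) (fun e => A ((P ∪ Q).erase e)) hAP hAQ
  rw [hm, hEcard] at hbound
  rw [← Nat.cast_sum, hEcard]
  rcases Nat.eq_zero_or_pos m with rfl | hmpos
  · simp
  rw [le_div_iff₀ (by positivity)]
  have hbound_real : ((m * (m + m) : ℕ) : ℝ) ≤ _ := Nat.cast_le.mpr hbound
  push_cast at hbound_real ⊢
  nlinarith

/-- On the even cycle with `s,t` diametrically opposite, any deterministic
algorithm outputting a shortest `s`-`t` path has average sensitivity at least `n/4`.
Here `E = P ∪ Q` is the edge set of the cycle, `P` and `Q` are the two edge-disjoint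
shortest `s`-`t` paths (each of length `n/2`), `A` is the algorithm (a map from edge
sets to edge sets), which on the cycle outputs one of the two shortest paths, and on
the cycle minus an edge outputs the unique shortest path avoiding that edge. -/
theorem stmt1 {α : Type*} [DecidableEq α] (n : ℕ) (hn : 0 < n) (hne : Even n)
    (E P Q : Finset α) (A : Finset α → Finset α)
    (hPQdisj : Disjoint P Q) (hPQunion : P ∪ Q = E)
    (hPcard : P.card = n / 2) (hQcard : Q.card = n / 2)
    (hAC : A E = P ∨ A E = Q)
    (hAP : ∀ e ∈ P, A (E.erase e) = Q)
    (hAQ : ∀ e ∈ Q, A (E.erase e) = P) :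
    (n : ℝ) / 4 ≤ (∑ e ∈ E, ((symmDiff (A E) (A (E.erase e))).card : ℝ)) / (E.card : ℝ) :=
  stmt1_general n hne E P Q A hPQdisj hPQunion hPcard hQcard hAP hAQ
end

section
/- Let A be a (randomized) graph algorithm whose 1-average sensitivity on any graph with n vertices and m' edges is at most f(n, m'), where average sensitivity of A on a graph H = (V, E') is the expectation over a uniformly random edge e ∈ E' of the earth mover's distance (with Hamming ground metric) between the output distributions A(H) and A(H − e). Then for any integer k ≥ 1 and any graph G with n vertices and m ≥ k edges, the expectation over k independently uniformly chosen edges e₁,…,e_k of the earth mover's distance between A(G) and A(G − {e₁,…,e_k}) is at most Σ_{i=1}^{k} f(n, m − i + 1). -/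
/-!
Remove the sampled edges one at a time.  Induct on the number `j` of edges still to be removed
from the current edge set `S ⊆ E`: the next edge, uniform in `E`, lies in `S` with probability
`#S / #E`, and then the triangle inequality charges on average at most `f #S` for the step to
`S.erase e`; otherwise nothing is removed.  The induction runs with the distance set to `0` on the
diagonal, which is harmless at the top level, where `k ≥ 1` edges of `E` are always removed.  The
bound `∑ i < j, f (#S - i)` grows with `j` because `f`, bounding averages of distances, is
nonnegative.
-/

open Finset

lemma Finset.image_univ_cons {α : Type*} [DecidableEq α] {j : ℕ} (e : α) (r : Fin j → α) :
    image (Fin.cons e r : Fin (j + 1) → α) univ = insert e (image r univ) := by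
  ext x
  simp [Fin.exists_fin_succ, eq_comm]

lemma Finset.sum_piFinset_const_succ {α β : Type*} [AddCommMonoid β] (E : Finset α) (j : ℕ)
    (F : (Fin (j + 1) → α) → β) :
    ∑ t ∈ Fintype.piFinset (fun _ : Fin (j + 1) => E), F t
      = ∑ e ∈ E, ∑ r ∈ Fintype.piFinset (fun _ : Fin j => E), F (Fin.cons e r) := by
  classical
  have h : Fintype.piFinset (fun _ : Fin (j + 1) => E)
      = (E ×ˢ Fintype.piFinset (fun _ : Fin j => E)).map
          (Fin.consEquiv (fun _ : Fin (j + 1) => α)).toEmbedding := by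
    ext t
    simp [Fin.consEquiv, Fin.forall_fin_succ, Fin.tail]
  rw [h, sum_map, sum_product]
  rfl

lemma Finset.sdiff_image_univ_cons {α : Type*} [DecidableEq α] {j : ℕ} (S : Finset α) (e : α)
    (r : Fin j → α) :
    S \ image (Fin.cons e r : Fin (j + 1) → α) univ = S.erase e \ image r univ := by
  rw [image_univ_cons, sdiff_insert, erase_sdiff_comm]

lemma sum_range_succ_sub {M : Type*} [AddCommMonoid M] (f : ℕ → M) (c j : ℕ) :
    ∑ i ∈ range (j + 1), f (c - i) = f c + ∑ i ∈ range j, f (c - 1 - i) := by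
  rw [sum_range_succ', add_comm]
  congr 1
  exact sum_congr rfl fun i _ => congrArg f (by omega)

section ZeroDiag

variable {β : Type*} [DecidableEq β] (d : β → β → ℝ)

def zeroDiag (x y : β) : ℝ := if x = y then 0 else d x y

@[simp]
lemma zeroDiag_self (x : β) : zeroDiag d x x = 0 := if_pos rfl

lemma zeroDiag_of_ne {x y : β} (h : x ≠ y) : zeroDiag d x y = d x y := if_neg h

variable {d}

lemma zeroDiag_le (hd : ∀ x y, 0 ≤ d x y) (x y : β) : zeroDiag d x y ≤ d x y := by
  unfold zeroDiag
  split_ifs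
  exacts [hd x y, le_rfl]

lemma zeroDiag_nonneg (hd : ∀ x y, 0 ≤ d x y) (x y : β) : 0 ≤ zeroDiag d x y := by
  unfold zeroDiag
  split_ifs
  exacts [le_rfl, hd x y]

lemma zeroDiag_triangle (hd : ∀ x y, 0 ≤ d x y) (htri : ∀ x y z, d x z ≤ d x y + d y z)
    (x y z : β) : zeroDiag d x z ≤ zeroDiag d x y + zeroDiag d y z := by
  by_cases hxz : x = z
  · subst hxz
    simpa using add_nonneg (zeroDiag_nonneg hd x y) (zeroDiag_nonneg hd y x)
  by_cases hxy : x = y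
  · subst hxy; simp
  by_cases hyz : y = z
  · subst hyz; simp
  simpa [zeroDiag_of_ne, hxz, hxy, hyz] using htri x y z

end ZeroDiag

section Sensitivity

variable {α : Type*} {f : ℕ → ℝ} {E : Finset α}

lemma nonneg_of_forall_average_le {g : Finset α → α → ℝ} (hg : ∀ S e, 0 ≤ g S e)
    (hsens : ∀ S : Finset α, 1 ≤ #S → (∑ e ∈ S, g S e) / #S ≤ f #S)
    {c : ℕ} (hc : 1 ≤ c) (hcE : c ≤ #E) : 0 ≤ f c := by
  obtain ⟨S, -, rfl⟩ := exists_subset_card_eq hcE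
  exact (div_nonneg (sum_nonneg fun e _ => hg S e) (Nat.cast_nonneg _)).trans (hsens S hc)

theorem sum_piFinset_sdiff_image_le [DecidableEq α] {ρ : Finset α → Finset α → ℝ}
    (hself : ∀ S, ρ S S = 0) (htri : ∀ X Y Z, ρ X Z ≤ ρ X Y + ρ Y Z)
    (hsens : ∀ S ⊆ E, 1 ≤ #S → ∑ e ∈ S, ρ S (S.erase e) ≤ #S * f #S)
    (hf : ∀ c, 1 ≤ c → c ≤ #E → 0 ≤ f c) (j : ℕ) {S : Finset α} (hSE : S ⊆ E) (hj : j ≤ #S) :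
    ∑ t ∈ Fintype.piFinset (fun _ : Fin j => E), ρ S (S \ image t univ)
      ≤ (#E : ℝ) ^ j * ∑ i ∈ range j, f (#S - i) := by
  induction j generalizing S with
  | zero => simp [hself]
  | succ j ih =>
    set m : ℝ := (#E : ℝ)
    set a := f #S
    set B := ∑ i ∈ range j, f (#S - 1 - i)
    set C := ∑ i ∈ range j, f (#S - i)
    have hS : #S ≤ #E := card_le_card hSE
    have hout : ∀ e ∈ E \ S, ∑ r ∈ Fintype.piFinset (fun _ : Fin j => E),
        ρ S (S.erase e \ image r univ) ≤ m ^ j * C := fun e he => by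
      rw [erase_eq_of_notMem (mem_sdiff.1 he).2]
      exact ih hSE (by omega)
    have hin : ∀ e ∈ S, ∑ r ∈ Fintype.piFinset (fun _ : Fin j => E),
        ρ S (S.erase e \ image r univ) ≤ m ^ j * ρ S (S.erase e) + m ^ j * B := fun e he => by
      have hcard : #(S.erase e) = #S - 1 := card_erase_of_mem he
      have hrest := ih ((erase_subset e S).trans hSE) (by omega)
      rw [hcard] at hrest
      calc _ ≤ ∑ r ∈ Fintype.piFinset (fun _ : Fin j => E),
              (ρ S (S.erase e) + ρ (S.erase e) (S.erase e \ image r univ)) :=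
            sum_le_sum fun r _ => htri _ _ _
        _ ≤ m ^ j * ρ S (S.erase e) + m ^ j * B := by
            rw [sum_add_distrib, sum_const, Fintype.card_piFinset_const, nsmul_eq_mul]
            push_cast
            linarith
    have hC : C ≤ a + B := by
      have hlast : 0 ≤ f (#S - j) := hf _ (by omega) (by omega)
      rw [← sum_range_succ_sub, sum_range_succ]
      linarith
    have hcompl : (#(E \ S) : ℝ) = m - #S := by
      rw [card_sdiff_of_subset hSE, Nat.cast_sub hS]
    have hSm : (#S : ℝ) ≤ m := Nat.cast_le.mpr hS
    rw [sum_piFinset_const_succ]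
    simp_rw [sdiff_image_univ_cons]
    calc _ = ∑ e ∈ E \ S, ∑ r ∈ Fintype.piFinset (fun _ : Fin j => E),
              ρ S (S.erase e \ image r univ)
            + ∑ e ∈ S, ∑ r ∈ Fintype.piFinset (fun _ : Fin j => E),
              ρ S (S.erase e \ image r univ) := (sum_sdiff hSE).symm
      _ ≤ ∑ _e ∈ E \ S, m ^ j * C + ∑ e ∈ S, (m ^ j * ρ S (S.erase e) + m ^ j * B) :=
          add_le_add (sum_le_sum hout) (sum_le_sum hin)
      _ = (m - #S) * (m ^ j * C) + (m ^ j * ∑ e ∈ S, ρ S (S.erase e) + #S * (m ^ j * B)) := by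
          rw [sum_const, nsmul_eq_mul, hcompl, sum_add_distrib, sum_const, nsmul_eq_mul,
            ← mul_sum]
      _ ≤ (m - #S) * (m ^ j * (a + B)) + (m ^ j * (#S * a) + #S * (m ^ j * B)) := by
          gcongr
          exact hsens S hSE (by omega)
      _ = m ^ (j + 1) * (a + B) := by ring
      _ = m ^ (j + 1) * ∑ i ∈ range (j + 1), f (#S - i) := by rw [sum_range_succ_sub]

end Sensitivity

/-- `k`-average sensitivity from average sensitivity: if a graph algorithm `A`
(from edge sets to outputs in a space with a distance `d` satisfying the triangle
inequality, e.g. earth mover's distance between output distributions with Hamming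
ground metric) has average sensitivity at most `f m'` on every graph with `m'` edges,
then its `k`-average sensitivity on a graph with `m ≥ k` edges is at most
`∑_{i=1}^{k} f (m - i + 1)`. -/
theorem stmt2 {α : Type*} [DecidableEq α] {D : Type*}
    (A : Finset α → D) (d : D → D → ℝ) (f : ℕ → ℝ)
    (hd_nonneg : ∀ x y, 0 ≤ d x y)
    (hd_tri : ∀ x y z, d x z ≤ d x y + d y z)
    (hsens : ∀ S : Finset α, 1 ≤ S.card →
      (∑ e ∈ S, d (A S) (A (S.erase e))) / (S.card : ℝ) ≤ f S.card)
    (E : Finset α) (k : ℕ) (hk : 1 ≤ k) (hm : k ≤ E.card) :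
    (∑ t ∈ Fintype.piFinset (fun _ : Fin k => E),
        d (A E) (A (E \ Finset.image t Finset.univ))) / ((E.card : ℝ) ^ k)
      ≤ ∑ i ∈ Finset.range k, f (E.card - i) := by
  set ρ := zeroDiag fun X Y : Finset α => d (A X) (A Y)
  have hdA : ∀ X Y : Finset α, 0 ≤ d (A X) (A Y) := fun _ _ => hd_nonneg _ _
  have hρ_sens : ∀ S ⊆ E, 1 ≤ #S → ∑ e ∈ S, ρ S (S.erase e) ≤ #S * f #S := fun S _ hS =>
    (sum_le_sum fun e _ => zeroDiag_le hdA _ _).trans <| by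
      rw [mul_comm, ← div_le_iff₀ (by exact_mod_cast hS)]
      exact hsens S hS
  have hρ_eq : ∀ t ∈ Fintype.piFinset (fun _ : Fin k => E),
      ρ E (E \ image t univ) = d (A E) (A (E \ image t univ)) := fun t ht => by
    refine zeroDiag_of_ne _ fun h => ?_
    have h0 : t ⟨0, hk⟩ ∈ E \ image t univ := h ▸ Fintype.mem_piFinset.1 ht _
    exact (mem_sdiff.1 h0).2 (mem_image_of_mem t (mem_univ _))
  rw [← sum_congr rfl hρ_eq, div_le_iff₀ (pow_pos (Nat.cast_pos.mpr (hk.trans hm)) k), mul_comm]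
  exact sum_piFinset_sdiff_image_le (ρ := ρ) (zeroDiag_self _)
    (zeroDiag_triangle hdA fun _ _ _ => hd_tri _ _ _) hρ_sens
    (fun _ => nonneg_of_forall_average_le (fun S e => hdA S (S.erase e)) hsens) k subset_rfl hm
end

section
/- Sequential composition of average sensitivity with respect to total variation distance: let A₁ and A₂ be randomized algorithms where A₁ maps a graph to a distribution over S₁ and A₂ maps a graph together with an element of S₁ to a distribution over S₂. Suppose for every graph G = (V,E): (i) the expectation over a uniform edge e ∈ E of d_TV(A₁(G), A₁(G−e)) is at most γ₁(G), and (ii) for every S₁ ∈ S₁, the expectation over a uniform edge e ∈ E of d_TV(A₂(G,S₁), A₂(G−e,S₁)) is at most γ₂(G). Let A(G) be the composed algorithm that samples S₁ ~ A₁(G) and then outputs a sample from A₂(G, S₁). Then the expectation over a uniform edge e ∈ E of d_TV(A(G), A(G−e)) is at most γ₁(G) + γ₂(G). -/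
/-- Total variation distance between two finitely supported distributions,
given by probability mass functions. -/
noncomputable def dTV {S : Type*} [Fintype S] (μ ν : S → ℝ) : ℝ :=
  (∑ x, |μ x - ν x|) / 2

/-- Sequential composability of average sensitivity with respect to the total
variation distance: if `A₁` has average sensitivity `γ₁` w.r.t. TV distance and
`A₂ (·, S₁)` has average sensitivity `γ₂` w.r.t. TV distance for every `S₁`, then the
composed algorithm `A(G) = A₂(G, A₁(G))` has average sensitivity `γ₁ + γ₂` w.r.t. TV
distance.  Graphs are modelled by their edge sets, and edge removal by `Finset.erase`. -/
theorem stmt3 {α S₁ S₂ : Type*} [DecidableEq α] [Fintype S₁] [Fintype S₂]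
    (A₁ : Finset α → S₁ → ℝ) (A₂ : Finset α → S₁ → S₂ → ℝ)
    (h₁nonneg : ∀ G s₁, 0 ≤ A₁ G s₁) (h₁sum : ∀ G : Finset α, ∑ s₁, A₁ G s₁ = 1)
    (h₂nonneg : ∀ G s₁ s₂, 0 ≤ A₂ G s₁ s₂) (h₂sum : ∀ (G : Finset α) s₁, ∑ s₂, A₂ G s₁ s₂ = 1)
    (E : Finset α) (hE : 1 ≤ E.card) (γ₁ γ₂ : ℝ)
    (hγ₁ : (∑ e ∈ E, dTV (A₁ E) (A₁ (E.erase e))) / (E.card : ℝ) ≤ γ₁)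
    (hγ₂ : ∀ s₁ : S₁, (∑ e ∈ E, dTV (A₂ E s₁) (A₂ (E.erase e) s₁)) / (E.card : ℝ) ≤ γ₂) :
    (∑ e ∈ E, dTV (fun s₂ => ∑ s₁, A₁ E s₁ * A₂ E s₁ s₂)
        (fun s₂ => ∑ s₁, A₁ (E.erase e) s₁ * A₂ (E.erase e) s₁ s₂)) / (E.card : ℝ)
      ≤ γ₁ + γ₂ := by
  have hn : (0 : ℝ) < (E.card : ℝ) := by
    exact_mod_cast Nat.lt_of_lt_of_le Nat.zero_lt_one hE
  rw [div_le_iff₀ hn]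
  have h1 : (∑ e ∈ E, dTV (A₁ E) (A₁ (E.erase e))) ≤ γ₁ * (E.card : ℝ) :=
    (div_le_iff₀ hn).mp hγ₁
  have h2 : ∀ s₁, (∑ e ∈ E, dTV (A₂ E s₁) (A₂ (E.erase e) s₁)) ≤ γ₂ * (E.card : ℝ) :=
    fun s₁ => (div_le_iff₀ hn).mp (hγ₂ s₁)
  -- single-edge lemma
  have key : ∀ e ∈ E,
      dTV (fun s₂ => ∑ s₁, A₁ E s₁ * A₂ E s₁ s₂)
        (fun s₂ => ∑ s₁, A₁ (E.erase e) s₁ * A₂ (E.erase e) s₁ s₂)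
      ≤ dTV (A₁ E) (A₁ (E.erase e))
        + ∑ s₁, A₁ E s₁ * dTV (A₂ E s₁) (A₂ (E.erase e) s₁) := by
    intro e _
    set G' := E.erase e with hG'
    unfold dTV
    have step : ∀ s₂ : S₂,
        |(∑ s₁, A₁ E s₁ * A₂ E s₁ s₂) - ∑ s₁, A₁ G' s₁ * A₂ G' s₁ s₂|
        ≤ ∑ s₁, (|A₁ E s₁ - A₁ G' s₁| * A₂ G' s₁ s₂
                  + A₁ E s₁ * |A₂ E s₁ s₂ - A₂ G' s₁ s₂|) := by
      intro s₂
      rw [← Finset.sum_sub_distrib]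
      refine le_trans (Finset.abs_sum_le_sum_abs _ _) (Finset.sum_le_sum fun s₁ _ => ?_)
      have : A₁ E s₁ * A₂ E s₁ s₂ - A₁ G' s₁ * A₂ G' s₁ s₂
          = (A₁ E s₁ - A₁ G' s₁) * A₂ G' s₁ s₂
            + A₁ E s₁ * (A₂ E s₁ s₂ - A₂ G' s₁ s₂) := by ring
      rw [this]
      refine le_trans (abs_add_le _ _) ?_
      rw [abs_mul, abs_mul, abs_of_nonneg (h₂nonneg G' s₁ s₂),
        abs_of_nonneg (h₁nonneg E s₁)]
    have hsum : (∑ s₂, |(∑ s₁, A₁ E s₁ * A₂ E s₁ s₂) - ∑ s₁, A₁ G' s₁ * A₂ G' s₁ s₂|)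
        ≤ (∑ s₁, |A₁ E s₁ - A₁ G' s₁|)
          + ∑ s₁, A₁ E s₁ * ∑ s₂, |A₂ E s₁ s₂ - A₂ G' s₁ s₂| := by
      calc (∑ s₂, |(∑ s₁, A₁ E s₁ * A₂ E s₁ s₂) - ∑ s₁, A₁ G' s₁ * A₂ G' s₁ s₂|)
          ≤ ∑ s₂, ∑ s₁, (|A₁ E s₁ - A₁ G' s₁| * A₂ G' s₁ s₂
              + A₁ E s₁ * |A₂ E s₁ s₂ - A₂ G' s₁ s₂|) :=
            Finset.sum_le_sum fun s₂ _ => step s₂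
        _ = ∑ s₁, ∑ s₂, (|A₁ E s₁ - A₁ G' s₁| * A₂ G' s₁ s₂
              + A₁ E s₁ * |A₂ E s₁ s₂ - A₂ G' s₁ s₂|) := Finset.sum_comm
        _ = ∑ s₁, (|A₁ E s₁ - A₁ G' s₁| * ∑ s₂, A₂ G' s₁ s₂
              + A₁ E s₁ * ∑ s₂, |A₂ E s₁ s₂ - A₂ G' s₁ s₂|) := by
            refine Finset.sum_congr rfl fun s₁ _ => ?_
            rw [Finset.sum_add_distrib, Finset.mul_sum, Finset.mul_sum]
        _ = (∑ s₁, |A₁ E s₁ - A₁ G' s₁|)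
              + ∑ s₁, A₁ E s₁ * ∑ s₂, |A₂ E s₁ s₂ - A₂ G' s₁ s₂| := by
            rw [Finset.sum_add_distrib]
            congr 1
            exact Finset.sum_congr rfl fun s₁ _ => by rw [h₂sum G' s₁, mul_one]
    calc (∑ s₂, |(∑ s₁, A₁ E s₁ * A₂ E s₁ s₂) - ∑ s₁, A₁ G' s₁ * A₂ G' s₁ s₂|) / 2
        ≤ ((∑ s₁, |A₁ E s₁ - A₁ G' s₁|)
            + ∑ s₁, A₁ E s₁ * ∑ s₂, |A₂ E s₁ s₂ - A₂ G' s₁ s₂|) / 2 := by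
          exact div_le_div_of_nonneg_right hsum (by norm_num) |>.trans_eq rfl
      _ = (∑ s₁, |A₁ E s₁ - A₁ G' s₁|) / 2
            + ∑ s₁, A₁ E s₁ * ((∑ s₂, |A₂ E s₁ s₂ - A₂ G' s₁ s₂|) / 2) := by
          rw [add_div]
          congr 1
          rw [Finset.sum_div]
          exact Finset.sum_congr rfl fun s₁ _ => by ring
  -- combine
  calc (∑ e ∈ E, dTV (fun s₂ => ∑ s₁, A₁ E s₁ * A₂ E s₁ s₂)
        (fun s₂ => ∑ s₁, A₁ (E.erase e) s₁ * A₂ (E.erase e) s₁ s₂))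
      ≤ ∑ e ∈ E, (dTV (A₁ E) (A₁ (E.erase e))
          + ∑ s₁, A₁ E s₁ * dTV (A₂ E s₁) (A₂ (E.erase e) s₁)) :=
        Finset.sum_le_sum key
    _ = (∑ e ∈ E, dTV (A₁ E) (A₁ (E.erase e)))
          + ∑ s₁, A₁ E s₁ * ∑ e ∈ E, dTV (A₂ E s₁) (A₂ (E.erase e) s₁) := by
        rw [Finset.sum_add_distrib]
        congr 1
        rw [Finset.sum_comm]
        exact Finset.sum_congr rfl fun s₁ _ => (Finset.mul_sum _ _ _).symm
    _ ≤ γ₁ * (E.card : ℝ) + ∑ s₁, A₁ E s₁ * (γ₂ * (E.card : ℝ)) := by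
        refine add_le_add h1 (Finset.sum_le_sum fun s₁ _ =>
          mul_le_mul_of_nonneg_left (h2 s₁) (h₁nonneg E s₁))
    _ = (γ₁ + γ₂) * (E.card : ℝ) := by
        rw [← Finset.sum_mul, h₁sum E, one_mul]; ring
end

section
/- Density ratio bound for nearby Laplace distributions: let τ > K > 0, δ > 0, and let τ_e satisfy |τ − τ_e| ≤ K. Let f and f_e be the densities of Lap(τ, δτ) and Lap(τ_e, δτ_e) respectively. Then for all x with 0 ≤ x ≤ 2·max{τ, τ_e}, (1 − K/τ)·exp(−2K/(δ(τ−K))) ≤ f(x)/f_e(x) ≤ (1 + K/τ)·exp(2K/(δ(τ−K))). -/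
/-!
The density ratio equals `(τe/τ) · exp((|x - τe|/τe - |x - τ|/τ)/δ)`, and the prefactor is within
`K/τ` of `1`. For the exponent let `s` be the larger of `τ, τe` (so `|x - s| ≤ s` on the given
range) and `t` the other; then
`|x - t|/t - |x - s|/s = (|x - t| - |x - s|)/t + |x - s|(s - t)/(st)`,
and each summand is at most `|s - t|/t ≤ K/(τ - K)` in absolute value.
-/

open Real

theorem abs_abs_sub_div_sub_abs_sub_div_le {s t x : ℝ} (hs : 0 < s) (ht : 0 < t)
    (hx : |x - s| ≤ s) :
    |(|x - t| / t - |x - s| / s)| ≤ 2 * |s - t| / t := by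
  have hsplit : |x - t| / t - |x - s| / s
      = (|x - t| - |x - s|) / t + |x - s| * (s - t) / (s * t) := by
    field_simp; ring
  have hshift : |(|x - t| - |x - s|)| ≤ |s - t| := by
    simpa using abs_abs_sub_abs_le_abs_sub (x - t) (x - s)
  have hscale : |x - s| * |s - t| / (s * t) ≤ |s - t| / t := by
    rw [div_le_div_iff₀ (by positivity) ht]
    nlinarith [abs_nonneg (s - t), mul_le_mul_of_nonneg_right hx (abs_nonneg (s - t))]
  calc |(|x - t| / t - |x - s| / s)|
      ≤ |(|x - t| - |x - s|)| / t + |x - s| * |s - t| / (s * t) := by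
        rw [hsplit]
        refine (abs_add_le _ _).trans_eq ?_
        rw [abs_div, abs_div, abs_mul, abs_abs, abs_of_pos ht, abs_of_pos (mul_pos hs ht)]
    _ ≤ |s - t| / t + |s - t| / t := by gcongr
    _ = 2 * |s - t| / t := by ring

theorem div_mul_exp_div_mul_exp {μ ν b c x : ℝ} (hb : b ≠ 0) (hc : c ≠ 0) :
    (1 / (2 * b) * exp (-|x - μ| / b)) / (1 / (2 * c) * exp (-|x - ν| / c))
      = c / b * exp (|x - ν| / c - |x - μ| / b) := by
  rw [exp_sub, neg_div, neg_div, exp_neg, exp_neg]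
  field_simp

theorem abs_abs_sub_div_sub_abs_sub_div_le_of_abs_sub_le {τ τe K x : ℝ} (hKτ : K < τ)
    (hτe : |τ - τe| ≤ K) (hx0 : 0 ≤ x) (hx1 : x ≤ 2 * max τ τe) :
    |(|x - τe| / τe - |x - τ| / τ)| ≤ 2 * K / (τ - K) := by
  obtain ⟨hlo, hhi⟩ := abs_le.mp hτe
  have hτK : 0 < τ - K := by linarith
  rcases le_total τe τ with hle | hle
  · have hx : |x - τ| ≤ τ := abs_le.mpr ⟨by linarith, by linarith [max_eq_left hle]⟩
    calc _ ≤ 2 * |τ - τe| / τe :=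
          abs_abs_sub_div_sub_abs_sub_div_le (by linarith) (by linarith) hx
      _ ≤ 2 * K / (τ - K) := by gcongr <;> linarith
  · have hx : |x - τe| ≤ τe := abs_le.mpr ⟨by linarith, by linarith [max_eq_right hle]⟩
    rw [abs_sub_comm]
    calc _ ≤ 2 * |τe - τ| / τ :=
          abs_abs_sub_div_sub_abs_sub_div_le (by linarith) (by linarith) hx
      _ ≤ 2 * K / (τ - K) := by rw [abs_sub_comm]; gcongr <;> linarith

theorem stmt9_general (τ τe K δ x : ℝ) (hKτ : K < τ) (hδ : 0 < δ)
    (hτe : |τ - τe| ≤ K) (hx0 : 0 ≤ x) (hx1 : x ≤ 2 * max τ τe) :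
    (1 - K / τ) * Real.exp (-(2 * K) / (δ * (τ - K)))
        ≤ ((1 / (2 * (δ * τ))) * Real.exp (-|x - τ| / (δ * τ))) /
          ((1 / (2 * (δ * τe))) * Real.exp (-|x - τe| / (δ * τe))) ∧
    ((1 / (2 * (δ * τ))) * Real.exp (-|x - τ| / (δ * τ))) /
          ((1 / (2 * (δ * τe))) * Real.exp (-|x - τe| / (δ * τe)))
        ≤ (1 + K / τ) * Real.exp ((2 * K) / (δ * (τ - K))) := by
  have hτ : 0 < τ := by linarith [(abs_nonneg (τ - τe)).trans hτe]
  have hτe' : 0 < τe := by linarith [(abs_le.mp hτe).2]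
  rw [div_mul_exp_div_mul_exp (by positivity) (by positivity), mul_div_mul_left _ _ hδ.ne']
  have hfactor : |τe / τ - 1| ≤ K / τ := by
    rwa [div_sub_one hτ.ne', abs_div, abs_of_pos hτ, abs_sub_comm, div_le_div_iff_of_pos_right hτ]
  have hexponent : |(|x - τe| / (δ * τe) - |x - τ| / (δ * τ))| ≤ 2 * K / (δ * (τ - K)) := by
    rw [div_mul_eq_div_div_swap, div_mul_eq_div_div_swap, ← sub_div, abs_div, abs_of_pos hδ,
      div_mul_eq_div_div_swap]
    gcongr
    exact abs_abs_sub_div_sub_abs_sub_div_le_of_abs_sub_le hKτ hτe hx0 hx1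
  obtain ⟨hfactor_lo, hfactor_hi⟩ := abs_le.mp hfactor
  obtain ⟨hexponent_lo, hexponent_hi⟩ := abs_le.mp hexponent
  constructor
  · refine mul_le_mul (by linarith) (exp_le_exp.mpr ?_) (exp_pos _).le (by positivity)
    rwa [neg_div]
  · exact mul_le_mul (by linarith) (exp_le_exp.mpr hexponent_hi) (exp_pos _).le (by linarith)

/-- Density ratio bound for nearby Laplace distributions: if `τ > K > 0`, `δ > 0`,
`|τ - τₑ| ≤ K`, and `f`, `fₑ` are the densities of `Lap(τ, δτ)` and `Lap(τₑ, δτₑ)`,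
then for all `x ∈ [0, 2 max{τ, τₑ}]`,
`(1 - K/τ)·exp(-2K/(δ(τ-K))) ≤ f(x)/fₑ(x) ≤ (1 + K/τ)·exp(2K/(δ(τ-K)))`. -/
theorem stmt9 (τ τe K δ x : ℝ) (hK : 0 < K) (hKτ : K < τ) (hδ : 0 < δ)
    (hτe : |τ - τe| ≤ K) (hx0 : 0 ≤ x) (hx1 : x ≤ 2 * max τ τe) :
    (1 - K / τ) * Real.exp (-(2 * K) / (δ * (τ - K)))
        ≤ ((1 / (2 * (δ * τ))) * Real.exp (-|x - τ| / (δ * τ))) /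
          ((1 / (2 * (δ * τe))) * Real.exp (-|x - τe| / (δ * τe))) ∧
    ((1 / (2 * (δ * τ))) * Real.exp (-|x - τ| / (δ * τ))) /
          ((1 / (2 * (δ * τe))) * Real.exp (-|x - τe| / (δ * τe)))
        ≤ (1 + K / τ) * Real.exp ((2 * K) / (δ * (τ - K))) :=
  stmt9_general τ τe K δ x hKτ hδ hτe hx0 hx1
end

section
/- Parallel composition of average sensitivity (two algorithms): let A₁, A₂ be randomized graph algorithms with average sensitivities β₁(G), β₂(G) respectively (in earth mover's distance with Hamming ground metric). Let A be the algorithm that on input G runs A₁ with probability ρ(G) and A₂ with probability 1 − ρ(G). If every solution output by A on G or on G − e (for any e ∈ E) has Hamming weight at most H, then E_{e∈E}[d_EM(A(G), A(G−e))] ≤ ρ(G)·β₁(G) + (1 − ρ(G))·β₂(G) + 2H·E_{e∈E}[|ρ(G) − ρ(G−e)|]. -/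
/-- Earth mover's (Wasserstein-1) distance between two finitely supported
distributions with respect to a ground cost `c`, defined via couplings. -/
noncomputable def dEM {X : Type*} [Fintype X] (c : X → X → ℝ) (μ ν : X → ℝ) : ℝ :=
  sInf {r : ℝ | ∃ π : X → X → ℝ, (∀ x y, 0 ≤ π x y) ∧ (∀ x, ∑ y, π x y = μ x) ∧
    (∀ y, ∑ x, π x y = ν y) ∧ ∑ x, ∑ y, c x y * π x y = r}

section aux
variable {X : Type*} [Fintype X] (c : X → X → ℝ)

def costSet (μ ν : X → ℝ) : Set ℝ :=
  {r : ℝ | ∃ π : X → X → ℝ, (∀ x y, 0 ≤ π x y) ∧ (∀ x, ∑ y, π x y = μ x) ∧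
    (∀ y, ∑ x, π x y = ν y) ∧ ∑ x, ∑ y, c x y * π x y = r}

lemma dEM_eq (μ ν : X → ℝ) : dEM c μ ν = sInf (costSet c μ ν) := rfl

lemma costSet_nonempty (μ ν : X → ℝ) (hμ0 : ∀ x, 0 ≤ μ x) (hμ1 : ∑ x, μ x = 1)
    (hν0 : ∀ x, 0 ≤ ν x) (hν1 : ∑ x, ν x = 1) : (costSet c μ ν).Nonempty := by
  refine ⟨_, fun x y => μ x * ν y, fun x y => mul_nonneg (hμ0 x) (hν0 y), ?_, ?_, rfl⟩
  · intro x; rw [← Finset.mul_sum, hν1, mul_one]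
  · intro y; rw [← Finset.sum_mul, hμ1, one_mul]

lemma costSet_bddBelow (μ ν : X → ℝ) (hc : ∀ x y, 0 ≤ c x y) :
    BddBelow (costSet c μ ν) := by
  refine ⟨0, fun r hr => ?_⟩
  obtain ⟨π, hπ0, -, -, hπc⟩ := hr
  rw [← hπc]
  exact Finset.sum_nonneg fun x _ => Finset.sum_nonneg fun y _ =>
    mul_nonneg (hc x y) (hπ0 x y)

lemma dEM_nonneg (μ ν : X → ℝ) (hc : ∀ x y, 0 ≤ c x y)
    (hne : (costSet c μ ν).Nonempty) : 0 ≤ dEM c μ ν :=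
  le_csInf hne fun r hr => by
    obtain ⟨π, hπ0, -, -, hπc⟩ := hr
    rw [← hπc]
    exact Finset.sum_nonneg fun x _ => Finset.sum_nonneg fun y _ =>
      mul_nonneg (hc x y) (hπ0 x y)

end aux

lemma dEM_mix_core {X : Type*} [Fintype X] (c : X → X → ℝ) (hc : ∀ x y, 0 ≤ c x y)
    (μ₁ μ₂ ν₁ ν₂ : X → ℝ)
    (hμ₁0 : ∀ x, 0 ≤ μ₁ x) (hμ₁1 : ∑ x, μ₁ x = 1)
    (hμ₂0 : ∀ x, 0 ≤ μ₂ x) (hμ₂1 : ∑ x, μ₂ x = 1)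
    (hν₁0 : ∀ x, 0 ≤ ν₁ x) (hν₁1 : ∑ x, ν₁ x = 1)
    (hν₂0 : ∀ x, 0 ≤ ν₂ x) (hν₂1 : ∑ x, ν₂ x = 1)
    (a b d : ℝ) (ha : 0 ≤ a) (hb : 0 ≤ b) (hd : 0 ≤ d)
    (ha1 : a ≤ 1) (hb1 : b ≤ 1) (M : ℝ)
    (hcross : 0 < d → ∀ x y, 0 < μ₁ x → 0 < ν₂ y → c x y ≤ M) :
    dEM c (fun x => (a + d) * μ₁ x + b * μ₂ x) (fun y => a * ν₁ y + (b + d) * ν₂ y)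
      ≤ a * dEM c μ₁ ν₁ + b * dEM c μ₂ ν₂ + d * M := by
  have hne₁ := costSet_nonempty c μ₁ ν₁ hμ₁0 hμ₁1 hν₁0 hν₁1
  have hne₂ := costSet_nonempty c μ₂ ν₂ hμ₂0 hμ₂1 hν₂0 hν₂1
  -- cross-term cost bound
  have hcrossSum : d * (∑ x, ∑ y, c x y * (μ₁ x * ν₂ y)) ≤ d * M := by
    rcases hd.eq_or_lt with h | h
    · simp [← h]
    refine mul_le_mul_of_nonneg_left ?_ hd
    calc (∑ x, ∑ y, c x y * (μ₁ x * ν₂ y))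
        ≤ ∑ x, ∑ y, M * (μ₁ x * ν₂ y) := by
          refine Finset.sum_le_sum fun x _ => Finset.sum_le_sum fun y _ => ?_
          rcases (mul_nonneg (hμ₁0 x) (hν₂0 y)).lt_or_eq with h0 | h0
          · rcases (hμ₁0 x).lt_or_eq with hx | hx
            · rcases (hν₂0 y).lt_or_eq with hy | hy
              · exact mul_le_mul_of_nonneg_right (hcross h x y hx hy) h0.le
              · rw [← hy] at h0; simp at h0
            · rw [← hx] at h0; simp at h0
          · rw [← h0]; simp
      _ = M := by
          have hrow : ∀ x, ∑ y, M * (μ₁ x * ν₂ y) = M * μ₁ x := by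
            intro x
            rw [← Finset.mul_sum, ← Finset.mul_sum, hν₂1, mul_one]
          rw [Finset.sum_congr rfl fun x _ => hrow x, ← Finset.mul_sum, hμ₁1, mul_one]
  -- ε-approximation argument
  refine le_of_forall_pos_le_add fun ε hε => ?_
  have hε2 : 0 < ε / 2 := by linarith
  obtain ⟨r₁, hr₁mem, hr₁⟩ := exists_lt_of_csInf_lt hne₁
    (show sInf (costSet c μ₁ ν₁) < dEM c μ₁ ν₁ + ε / 2 by rw [← dEM_eq]; linarith)
  obtain ⟨r₂, hr₂mem, hr₂⟩ := exists_lt_of_csInf_lt hne₂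
    (show sInf (costSet c μ₂ ν₂) < dEM c μ₂ ν₂ + ε / 2 by rw [← dEM_eq]; linarith)
  obtain ⟨π₁, hπ₁0, hπ₁μ, hπ₁ν, hπ₁c⟩ := hr₁mem
  obtain ⟨π₂, hπ₂0, hπ₂μ, hπ₂ν, hπ₂c⟩ := hr₂mem
  set π : X → X → ℝ := fun x y => a * π₁ x y + b * π₂ x y + d * (μ₁ x * ν₂ y) with hπdef
  have hπ0 : ∀ x y, 0 ≤ π x y := fun x y =>
    add_nonneg (add_nonneg (mul_nonneg ha (hπ₁0 x y)) (mul_nonneg hb (hπ₂0 x y)))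
      (mul_nonneg hd (mul_nonneg (hμ₁0 x) (hν₂0 y)))
  have hπrow : ∀ x, ∑ y, π x y = (a + d) * μ₁ x + b * μ₂ x := by
    intro x
    have h : ∑ y, π x y
        = a * (∑ y, π₁ x y) + b * (∑ y, π₂ x y) + d * (μ₁ x * (∑ y, ν₂ y)) := by
      rw [Finset.mul_sum, Finset.mul_sum, Finset.mul_sum, Finset.mul_sum,
        ← Finset.sum_add_distrib, ← Finset.sum_add_distrib]
    rw [h, hπ₁μ, hπ₂μ, hν₂1]
    ring
  have hπcol : ∀ y, ∑ x, π x y = a * ν₁ y + (b + d) * ν₂ y := by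
    intro y
    have h : ∑ x, π x y
        = a * (∑ x, π₁ x y) + b * (∑ x, π₂ x y) + d * ((∑ x, μ₁ x) * ν₂ y) := by
      rw [Finset.mul_sum, Finset.mul_sum, Finset.sum_mul, Finset.mul_sum,
        ← Finset.sum_add_distrib, ← Finset.sum_add_distrib]
    rw [h, hπ₁ν, hπ₂ν, hμ₁1]
    ring
  have hmem : (∑ x, ∑ y, c x y * π x y) ∈
      costSet c (fun x => (a + d) * μ₁ x + b * μ₂ x) (fun y => a * ν₁ y + (b + d) * ν₂ y) :=
    ⟨π, hπ0, hπrow, hπcol, rfl⟩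
  have hle := csInf_le (costSet_bddBelow c _ _ hc) hmem
  rw [← dEM_eq] at hle
  have hcost : ∑ x, ∑ y, c x y * π x y
      = a * r₁ + b * r₂ + d * (∑ x, ∑ y, c x y * (μ₁ x * ν₂ y)) := by
    rw [← hπ₁c, ← hπ₂c]
    rw [Finset.mul_sum, Finset.mul_sum, Finset.mul_sum, ← Finset.sum_add_distrib,
      ← Finset.sum_add_distrib]
    refine Finset.sum_congr rfl fun x _ => ?_
    rw [Finset.mul_sum, Finset.mul_sum, Finset.mul_sum, ← Finset.sum_add_distrib,
      ← Finset.sum_add_distrib]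
    exact Finset.sum_congr rfl fun y _ => by dsimp [π]; ring
  rw [hcost] at hle
  have h1 : a * r₁ ≤ a * (dEM c μ₁ ν₁ + ε / 2) := mul_le_mul_of_nonneg_left hr₁.le ha
  have h2 : b * r₂ ≤ b * (dEM c μ₂ ν₂ + ε / 2) := mul_le_mul_of_nonneg_left hr₂.le hb
  have hd1 : 0 ≤ dEM c μ₁ ν₁ := dEM_nonneg c μ₁ ν₁ hc hne₁
  have hd2 : 0 ≤ dEM c μ₂ ν₂ := dEM_nonneg c μ₂ ν₂ hc hne₂
  nlinarith

lemma dEM_mix {X : Type*} [Fintype X] (c : X → X → ℝ) (hc : ∀ x y, 0 ≤ c x y)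
    (μ₁ μ₂ ν₁ ν₂ : X → ℝ)
    (hμ₁0 : ∀ x, 0 ≤ μ₁ x) (hμ₁1 : ∑ x, μ₁ x = 1)
    (hμ₂0 : ∀ x, 0 ≤ μ₂ x) (hμ₂1 : ∑ x, μ₂ x = 1)
    (hν₁0 : ∀ x, 0 ≤ ν₁ x) (hν₁1 : ∑ x, ν₁ x = 1)
    (hν₂0 : ∀ x, 0 ≤ ν₂ x) (hν₂1 : ∑ x, ν₂ x = 1)
    (ρ ρ' : ℝ) (hρ0 : 0 ≤ ρ) (hρ1 : ρ ≤ 1) (hρ'0 : 0 ≤ ρ') (hρ'1 : ρ' ≤ 1) (M : ℝ)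
    (hM : ∀ x y, 0 < ρ * μ₁ x + (1 - ρ) * μ₂ x → 0 < ρ' * ν₁ y + (1 - ρ') * ν₂ y →
      c x y ≤ M) :
    dEM c (fun x => ρ * μ₁ x + (1 - ρ) * μ₂ x) (fun y => ρ' * ν₁ y + (1 - ρ') * ν₂ y)
      ≤ ρ * dEM c μ₁ ν₁ + (1 - ρ) * dEM c μ₂ ν₂ + M * |ρ - ρ'| := by
  have hd1 : 0 ≤ dEM c μ₁ ν₁ :=
    dEM_nonneg c μ₁ ν₁ hc (costSet_nonempty c μ₁ ν₁ hμ₁0 hμ₁1 hν₁0 hν₁1)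
  have hd2 : 0 ≤ dEM c μ₂ ν₂ :=
    dEM_nonneg c μ₂ ν₂ hc (costSet_nonempty c μ₂ ν₂ hμ₂0 hμ₂1 hν₂0 hν₂1)
  rcases le_total ρ' ρ with hle | hle
  · have key := dEM_mix_core c hc μ₁ μ₂ ν₁ ν₂ hμ₁0 hμ₁1 hμ₂0 hμ₂1 hν₁0 hν₁1 hν₂0 hν₂1
      ρ' (1 - ρ) (ρ - ρ') hρ'0 (by linarith) (by linarith) hρ'1 (by linarith) M
      (fun hd x y hx hy => hM x y
        (by nlinarith [hμ₂0 x, hμ₁0 x])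
        (by nlinarith [hν₁0 y, hν₂0 y]))
    have e1 : (fun x => (ρ' + (ρ - ρ')) * μ₁ x + (1 - ρ) * μ₂ x)
        = fun x => ρ * μ₁ x + (1 - ρ) * μ₂ x := by funext x; ring
    have e2 : (fun y => ρ' * ν₁ y + ((1 - ρ) + (ρ - ρ')) * ν₂ y)
        = fun y => ρ' * ν₁ y + (1 - ρ') * ν₂ y := by funext y; ring
    rw [e1, e2] at key
    have habs : |ρ - ρ'| = ρ - ρ' := abs_of_nonneg (by linarith)
    rw [habs]
    nlinarith [mul_le_mul_of_nonneg_right hle hd1]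
  · have key := dEM_mix_core c hc μ₂ μ₁ ν₂ ν₁ hμ₂0 hμ₂1 hμ₁0 hμ₁1 hν₂0 hν₂1 hν₁0 hν₁1
      (1 - ρ') ρ (ρ' - ρ) (by linarith) hρ0 (by linarith) (by linarith) hρ1 M
      (fun hd x y hx hy => hM x y
        (by nlinarith [hμ₁0 x, hμ₂0 x])
        (by nlinarith [hν₂0 y, hν₁0 y]))
    have e1 : (fun x => ((1 - ρ') + (ρ' - ρ)) * μ₂ x + ρ * μ₁ x)
        = fun x => ρ * μ₁ x + (1 - ρ) * μ₂ x := by funext x; ring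
    have e2 : (fun y => (1 - ρ') * ν₂ y + (ρ + (ρ' - ρ)) * ν₁ y)
        = fun y => ρ' * ν₁ y + (1 - ρ') * ν₂ y := by funext y; ring
    rw [e1, e2] at key
    have habs : |ρ - ρ'| = ρ' - ρ := by rw [abs_sub_comm]; exact abs_of_nonneg (by linarith)
    rw [habs]
    nlinarith [mul_le_mul_of_nonneg_right hle hd2]


/-- Parallel composability (two algorithms): if `A₁`, `A₂` have average
sensitivities `β₁`, `β₂` (earth mover's distance with Hamming ground metric, outputs
being finsets), and `A` runs `A₁` with probability `ρ(G)` and `A₂` otherwise, and all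
solutions output by `A` on `G` or on `G − e` have Hamming weight (cardinality) at most
`H`, then the average sensitivity of `A` is at most
`ρ(G)·β₁ + (1−ρ(G))·β₂ + 2H·E_{e∈E}[|ρ(G) − ρ(G−e)|]`. -/
theorem stmt16 {α β : Type*} [DecidableEq α] [DecidableEq β] [Fintype β]
    (A₁ A₂ : Finset α → Finset β → ℝ) (ρ : Finset α → ℝ)
    (h₁nonneg : ∀ G S, 0 ≤ A₁ G S) (h₁sum : ∀ G : Finset α, ∑ S, A₁ G S = 1)
    (h₂nonneg : ∀ G S, 0 ≤ A₂ G S) (h₂sum : ∀ G : Finset α, ∑ S, A₂ G S = 1)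
    (hρ0 : ∀ G : Finset α, 0 ≤ ρ G) (hρ1 : ∀ G : Finset α, ρ G ≤ 1)
    (E : Finset α) (hE : 1 ≤ E.card) (β₁ β₂ H : ℝ)
    (hβ₁ : (∑ e ∈ E, dEM (fun S T : Finset β => ((symmDiff S T).card : ℝ))
        (A₁ E) (A₁ (E.erase e))) / (E.card : ℝ) ≤ β₁)
    (hβ₂ : (∑ e ∈ E, dEM (fun S T : Finset β => ((symmDiff S T).card : ℝ))
        (A₂ E) (A₂ (E.erase e))) / (E.card : ℝ) ≤ β₂)
    (hH : ∀ e ∈ E, ∀ S : Finset β,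
      (0 < ρ E * A₁ E S + (1 - ρ E) * A₂ E S ∨
        0 < ρ (E.erase e) * A₁ (E.erase e) S + (1 - ρ (E.erase e)) * A₂ (E.erase e) S) →
      (S.card : ℝ) ≤ H) :
    (∑ e ∈ E, dEM (fun S T : Finset β => ((symmDiff S T).card : ℝ))
        (fun S => ρ E * A₁ E S + (1 - ρ E) * A₂ E S)
        (fun S => ρ (E.erase e) * A₁ (E.erase e) S + (1 - ρ (E.erase e)) * A₂ (E.erase e) S)) /
      (E.card : ℝ)
      ≤ ρ E * β₁ + (1 - ρ E) * β₂ +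
        2 * H * ((∑ e ∈ E, |ρ E - ρ (E.erase e)|) / (E.card : ℝ)) := by
  set c : Finset β → Finset β → ℝ := fun S T => ((symmDiff S T).card : ℝ) with hcdef
  have hc : ∀ S T, 0 ≤ c S T := fun S T => by positivity
  have hpt : ∀ e ∈ E, dEM c
      (fun S => ρ E * A₁ E S + (1 - ρ E) * A₂ E S)
      (fun S => ρ (E.erase e) * A₁ (E.erase e) S + (1 - ρ (E.erase e)) * A₂ (E.erase e) S)
      ≤ ρ E * dEM c (A₁ E) (A₁ (E.erase e)) + (1 - ρ E) * dEM c (A₂ E) (A₂ (E.erase e))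
        + 2 * H * |ρ E - ρ (E.erase e)| := by
    intro e he
    exact dEM_mix c hc (A₁ E) (A₂ E) (A₁ (E.erase e)) (A₂ (E.erase e))
      (h₁nonneg E) (h₁sum E) (h₂nonneg E) (h₂sum E)
      (h₁nonneg _) (h₁sum _) (h₂nonneg _) (h₂sum _)
      (ρ E) (ρ (E.erase e)) (hρ0 E) (hρ1 E) (hρ0 _) (hρ1 _) (2 * H)
      (fun S T h1 h2 => by
        have hST : (symmDiff S T).card ≤ S.card + T.card :=
          le_trans (Finset.card_le_card symmDiff_le_sup) (Finset.card_union_le S T)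
        have hS := hH e he S (Or.inl h1)
        have hT := hH e he T (Or.inr h2)
        have : ((symmDiff S T).card : ℝ) ≤ (S.card : ℝ) + (T.card : ℝ) := by
          exact_mod_cast hST
        dsimp [c]; linarith)
  have hn : (0 : ℝ) < (E.card : ℝ) := by exact_mod_cast hE
  have hsum : (∑ e ∈ E, dEM c
      (fun S => ρ E * A₁ E S + (1 - ρ E) * A₂ E S)
      (fun S => ρ (E.erase e) * A₁ (E.erase e) S + (1 - ρ (E.erase e)) * A₂ (E.erase e) S))
      ≤ ρ E * (∑ e ∈ E, dEM c (A₁ E) (A₁ (E.erase e)))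
        + (1 - ρ E) * (∑ e ∈ E, dEM c (A₂ E) (A₂ (E.erase e)))
        + 2 * H * (∑ e ∈ E, |ρ E - ρ (E.erase e)|) := by
    rw [Finset.mul_sum, Finset.mul_sum, Finset.mul_sum, ← Finset.sum_add_distrib,
      ← Finset.sum_add_distrib]
    exact Finset.sum_le_sum hpt
  have hdiv := (div_le_div_iff_of_pos_right hn).mpr hsum
  refine le_trans hdiv ?_
  rw [add_div, add_div, mul_div_assoc, mul_div_assoc, mul_div_assoc]
  have h1 := mul_le_mul_of_nonneg_left hβ₁ (hρ0 E)
  have h2 := mul_le_mul_of_nonneg_left hβ₂ (by linarith [hρ1 E] : (0:ℝ) ≤ 1 - ρ E)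
  linarith
end

section
/- Every randomized algorithm for the 2-coloring problem has average sensitivity Ω(n). Precisely, there is a constant c = 1/256 such that for all sufficiently large n divisible by 16, no randomized algorithm A that on every bipartite graph on n vertices outputs a proper 2-coloring can satisfy E_{e∈E(G)}[d_EM(A(G), A(G−e))] ≤ β·n for all n-vertex paths G and all graphs obtained from them by deleting one edge, whenever β < 1/256. -/
/-- `G` is a path graph on its whole (labeled) vertex set `Fin n`: for some
ordering of the vertices, adjacency is exactly between consecutive vertices. -/
def IsPathGraph {n : ℕ} (G : SimpleGraph (Fin n)) : Prop :=
  ∃ σ : Equiv.Perm (Fin n), ∀ u v : Fin n,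
    G.Adj u v ↔ ((σ u : ℕ) + 1 = (σ v : ℕ) ∨ (σ v : ℕ) + 1 = (σ u : ℕ))


namespace S17
open Finset

def par (j : ℕ) : Bool := j % 2 == 1

lemma par_succ (j : ℕ) : par (j + 1) = !(par j) := by
  rcases Nat.mod_two_eq_zero_or_one j with h | h <;>
    simp [par, Nat.add_mod, h]

lemma par_ne (j : ℕ) : par (j+1) ≠ par j := by
  rw [par_succ]; cases par j <;> simp

variable {n : ℕ}

def pg (σ : Equiv.Perm (Fin n)) : SimpleGraph (Fin n) where
  Adj u v := ((σ u : ℕ) + 1 = (σ v : ℕ) ∨ (σ v : ℕ) + 1 = (σ u : ℕ))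
  symm := ⟨by intro u v h; tauto⟩
  loopless := ⟨by intro u h; omega⟩

lemma isPathGraph_pg (σ : Equiv.Perm (Fin n)) : IsPathGraph (pg σ) := ⟨σ, fun _ _ => Iff.rfl⟩

lemma pg_proper (σ : Equiv.Perm (Fin n)) {u v : Fin n} (h : (pg σ).Adj u v) :
    par (σ u) ≠ par (σ v) := by
  rcases h with h | h
  · rw [← h, par_succ]; cases par (σ u : ℕ) <;> simp
  · rw [← h, par_succ]; cases par (σ v : ℕ) <;> simp

lemma pg_colorable (σ : Equiv.Perm (Fin n)) : (pg σ).Colorable 2 := by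
  refine ⟨SimpleGraph.Coloring.mk (fun u => if par (σ u) then 0 else 1) ?_⟩
  intro u v h
  have := pg_proper σ h
  cases hu : par (σ u : ℕ) <;> cases hv : par (σ v : ℕ) <;> simp_all

def ix (hn : 0 < n) (i : ℕ) : Fin n := ⟨i % n, Nat.mod_lt _ hn⟩

lemma ix_val (hn : 0 < n) {i : ℕ} (h : i < n) : ((ix hn i : Fin n) : ℕ) = i :=
  Nat.mod_eq_of_lt h

def cut (hn : 0 < n) (σ : Equiv.Perm (Fin n)) (i : ℕ) : Sym2 (Fin n) :=
  s(σ⁻¹ (ix hn i), σ⁻¹ (ix hn (i+1)))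

def qg (hn : 0 < n) (σ : Equiv.Perm (Fin n)) (i : ℕ) : SimpleGraph (Fin n) :=
  (pg σ).deleteEdges {cut hn σ i}

lemma qg_colorable (hn : 0 < n) (σ : Equiv.Perm (Fin n)) (i : ℕ) : (qg hn σ i).Colorable 2 :=
  SimpleGraph.Colorable.mono_left (SimpleGraph.deleteEdges_le _) (pg_colorable σ)

/-- the four candidate colorings -/
def w (σ : Equiv.Perm (Fin n)) (i : ℕ) (a b : Bool) : Fin n → Bool :=
  fun u => xor (if (σ u : ℕ) ≤ i then a else b) (par (σ u))

end S17

namespace S17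
open Finset
variable {n : ℕ}

def rmap (hn : 0 < n) (i : ℕ) (u : Fin n) : Fin n :=
  if h : (u : ℕ) ≤ i ∨ n ≤ i + 1 then u else ⟨n + i - u, by have := u.isLt; omega⟩

lemma rmap_involutive (hn : 0 < n) (i : ℕ) : Function.Involutive (rmap hn i) := by
  intro u
  have hu := u.isLt
  rcases Classical.em ((u : ℕ) ≤ i ∨ n ≤ i + 1) with h | h
  · simp [rmap, h]
  · have h2 : ¬(u : ℕ) ≤ i ∧ ¬n ≤ i + 1 := by tauto
    have hv : rmap hn i u = ⟨n + i - (u : ℕ), by omega⟩ := dif_neg h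
    rw [hv]
    unfold rmap
    rw [dif_neg (by simp only [Fin.val_mk]; omega)]
    ext; simp only [Fin.val_mk]; omega

lemma rmap_val (hn : 0 < n) (i : ℕ) (u : Fin n) :
    ((rmap hn i u : Fin n) : ℕ) = if (u : ℕ) ≤ i ∨ n ≤ i + 1 then (u : ℕ) else n + i - u := by
  rcases Classical.em ((u : ℕ) ≤ i ∨ n ≤ i + 1) with h | h
  · rw [rmap, dif_pos h, if_pos h]
  · rw [rmap, dif_neg h, if_neg h]

def ρ (hn : 0 < n) (i : ℕ) : Equiv.Perm (Fin n) := (rmap_involutive hn i).toPerm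

@[simp] lemma ρ_apply (hn : 0 < n) (i : ℕ) (u : Fin n) : ρ hn i u = rmap hn i u := rfl

lemma qg_adj_iff (hn : 0 < n) (σ : Equiv.Perm (Fin n)) {i : ℕ} (hi : i + 1 < n) (u v : Fin n) :
    (qg hn σ i).Adj u v ↔
      (((σ u : ℕ) + 1 = (σ v : ℕ) ∨ (σ v : ℕ) + 1 = (σ u : ℕ)) ∧
        ¬(((σ u : ℕ) = i ∧ (σ v : ℕ) = i + 1) ∨ ((σ v : ℕ) = i ∧ (σ u : ℕ) = i + 1))) := by
  have hvi : ((ix hn i : Fin n) : ℕ) = i := ix_val hn (by omega)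
  have hvi1 : ((ix hn (i+1) : Fin n) : ℕ) = i + 1 := ix_val hn hi
  have e1 : ∀ z : Fin n, u = σ⁻¹ z ↔ (σ u : Fin n) = z := fun z => Equiv.Perm.eq_inv_iff_eq
  have e2 : ∀ z : Fin n, v = σ⁻¹ z ↔ (σ v : Fin n) = z := fun z => Equiv.Perm.eq_inv_iff_eq
  simp only [qg, SimpleGraph.deleteEdges_adj, Set.mem_singleton_iff, cut, pg,
    Sym2.eq, Sym2.rel_iff', Prod.mk.injEq, Prod.swap_prod_mk, e1, e2, Fin.ext_iff,
    hvi, hvi1]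
  tauto

lemma qg_rho (hn : 0 < n) (σ : Equiv.Perm (Fin n)) {i : ℕ} (hi : i + 1 < n) :
    qg hn (ρ hn i * σ) i = qg hn σ i := by
  have hni : ¬ n ≤ i + 1 := by omega
  ext u v
  rw [qg_adj_iff hn _ hi, qg_adj_iff hn σ hi]
  have hA := (σ u).isLt
  have hB := (σ v).isLt
  simp only [Equiv.Perm.mul_apply, ρ_apply, rmap_val, hni, or_false]
  split_ifs <;> omega

end S17

namespace S17
open Finset
variable {n : ℕ}

lemma pg_adj (σ : Equiv.Perm (Fin n)) (u v : Fin n) :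
    (pg σ).Adj u v ↔ ((σ u : ℕ) + 1 = (σ v : ℕ) ∨ (σ v : ℕ) + 1 = (σ u : ℕ)) := Iff.rfl

lemma qg_coloring (hn : 0 < n) (σ : Equiv.Perm (Fin n)) {i : ℕ} (hi : i + 1 < n)
    (f : Fin n → Bool) (hf : ∀ u v, (qg hn σ i).Adj u v → f u ≠ f v) :
    ∃ a b, f = w σ i a b := by
  set a := f (σ⁻¹ (ix hn 0)) with ha
  set b := xor (f (σ⁻¹ (ix hn (i+1)))) (par (i+1)) with hb
  refine ⟨a, b, ?_⟩
  have key : ∀ j, ∀ hj : j < n, f (σ⁻¹ ⟨j, hj⟩) = xor (if j ≤ i then a else b) (par j) := by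
    intro j
    induction j with
    | zero =>
      intro hj
      have : (⟨0, hj⟩ : Fin n) = ix hn 0 := by ext; simp [ix_val hn hn]
      rw [this, if_pos (Nat.zero_le i)]
      simp [par, ha]
    | succ j IH =>
      intro hj
      have hj' : j < n := by omega
      by_cases hji : j = i
      · subst hji
        have hix : (⟨j+1, hj⟩ : Fin n) = ix hn (j+1) := by ext; simp [ix_val hn hj]
        rw [hix, if_neg (by omega), hb]
        cases f (σ⁻¹ (ix hn (j + 1))) <;> cases par (j+1) <;> simp
      · have hadj : (qg hn σ i).Adj (σ⁻¹ ⟨j, hj'⟩) (σ⁻¹ ⟨j+1, hj⟩) := by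
          rw [qg_adj_iff hn σ hi]
          simp only [Equiv.Perm.inv_def, Equiv.apply_symm_apply, Fin.val_mk]
          exact ⟨Or.inl trivial, by omega⟩
        have hne := hf _ _ hadj
        rw [IH hj'] at hne
        have hval : f (σ⁻¹ ⟨j+1, hj⟩) = !(xor (if j ≤ i then a else b) (par j)) := by
          cases hfv : f (σ⁻¹ ⟨j+1, hj⟩) <;>
            cases hx : xor (if j ≤ i then a else b) (par j) <;> simp_all
        rw [hval, par_succ]
        by_cases hc : j + 1 ≤ i
        · rw [if_pos hc, if_pos (by omega)]
          cases a <;> cases par j <;> simp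
        · rw [if_neg hc, if_neg (by omega)]
          cases b <;> cases par j <;> simp
  funext u
  have hu := (σ u).isLt
  have h2 := key (σ u) hu
  have h3 : (⟨(σ u : ℕ), hu⟩ : Fin n) = σ u := by ext; rfl
  rw [h3, Equiv.Perm.inv_def, Equiv.symm_apply_apply] at h2
  rw [h2]; rfl

lemma pg_coloring (hn : 0 < n) (σ : Equiv.Perm (Fin n)) {i : ℕ} (hi : i + 1 < n)
    (f : Fin n → Bool) (hf : ∀ u v, (pg σ).Adj u v → f u ≠ f v) :
    ∃ a, f = w σ i a a := by
  obtain ⟨a, b, hab⟩ := qg_coloring hn σ hi f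
    (fun u v h => hf u v (SimpleGraph.deleteEdges_le _ h))
  have hvi : ((ix hn i : Fin n) : ℕ) = i := ix_val hn (by omega)
  have hvi1 : ((ix hn (i+1) : Fin n) : ℕ) = i + 1 := ix_val hn hi
  have hadj : (pg σ).Adj (σ⁻¹ (ix hn i)) (σ⁻¹ (ix hn (i+1))) := by
    rw [pg_adj, Equiv.Perm.inv_def, Equiv.apply_symm_apply, Equiv.apply_symm_apply, hvi, hvi1]
    omega
  have hne := hf _ _ hadj
  rw [hab] at hne
  simp only [w, Equiv.Perm.inv_def, Equiv.apply_symm_apply, hvi, hvi1, if_pos (le_refl i),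
    if_neg (by omega : ¬ i + 1 ≤ i), par_succ] at hne
  have : a = b := by cases a <;> cases b <;> cases par i <;> simp_all
  exact ⟨a, by rw [hab, this]⟩

lemma w_rho (hn : 0 < n) (σ : Equiv.Perm (Fin n)) {i : ℕ} (hi : i + 1 < n)
    (hodd : (n + i) % 2 = 1) (a : Bool) :
    w (ρ hn i * σ) i a a = w σ i a (!a) := by
  funext u
  have hA := (σ u).isLt
  have hni : ¬ n ≤ i + 1 := by omega
  simp only [w, Equiv.Perm.mul_apply, ρ_apply]
  by_cases h : (σ u : ℕ) ≤ i
  · have hv : (rmap hn i (σ u) : ℕ) = (σ u : ℕ) := by rw [rmap_val]; simp [h]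
    simp only [hv, if_pos h]
  · have hv : (rmap hn i (σ u) : ℕ) = n + i - (σ u : ℕ) := by
      rw [rmap_val, if_neg (by tauto)]
    simp only [hv]
    rw [if_neg (by omega), if_neg h]
    have hp : par (n + i - (σ u : ℕ)) = !par (σ u : ℕ) := by
      rcases Nat.mod_two_eq_zero_or_one (σ u : ℕ) with h0 | h0
      · have h1 : (n + i - (σ u : ℕ)) % 2 = 1 := by omega
        simp [par, h0, h1]
      · have h1 : (n + i - (σ u : ℕ)) % 2 = 0 := by omega
        simp [par, h0, h1]
    rw [hp]
    cases a <;> cases par ((σ u : Fin n) : ℕ) <;> simp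

lemma edge_enum (hn : 0 < n) (σ : Equiv.Perm (Fin n)) [Fintype (pg σ).edgeSet] :
    (pg σ).edgeFinset = (range (n-1)).image (fun i => cut hn σ i) := by
  ext e
  induction e with
  | _ u v =>
    simp only [SimpleGraph.mem_edgeFinset, SimpleGraph.mem_edgeSet, mem_image, mem_range]
    constructor
    · intro h
      have huv : ∀ x y : Fin n, (σ x : ℕ) + 1 = (σ y : ℕ) → cut hn σ (σ x : ℕ) = s(x, y) := by
        intro x y hxy
        have h1 : ix hn (σ x : ℕ) = σ x := by ext; exact ix_val hn (σ x).isLt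
        have h2 : ix hn ((σ x : ℕ) + 1) = σ y := by ext; rw [ix_val hn (by rw [hxy]; exact (σ y).isLt), hxy]
        rw [cut, h1, h2, Equiv.Perm.inv_def, Equiv.symm_apply_apply, Equiv.symm_apply_apply]
      rcases h with h | h
      · exact ⟨(σ u : ℕ), by have := (σ v).isLt; omega, huv u v h⟩
      · exact ⟨(σ v : ℕ), by have := (σ u).isLt; omega, by rw [huv v u h]; exact Sym2.eq_swap⟩
    · rintro ⟨i, hi, heq⟩
      have h1 : ((ix hn i : Fin n) : ℕ) = i := ix_val hn (by omega)
      have h2 : ((ix hn (i+1) : Fin n) : ℕ) = i + 1 := ix_val hn (by omega)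
      have hadj : (pg σ).Adj (σ⁻¹ (ix hn i)) (σ⁻¹ (ix hn (i+1))) := by
        rw [pg_adj, Equiv.Perm.inv_def, Equiv.apply_symm_apply, Equiv.apply_symm_apply, h1, h2]
        omega
      have hmem : cut hn σ i ∈ (pg σ).edgeSet := (SimpleGraph.mem_edgeSet _).mpr hadj
      rw [heq] at hmem
      exact hmem

lemma cut_injOn (hn : 0 < n) (σ : Equiv.Perm (Fin n)) {i j : ℕ} (hi : i < n - 1)
    (hj : j < n - 1) (h : cut hn σ i = cut hn σ j) : i = j := by
  have e : ∀ k l : Fin n, σ⁻¹ k = σ⁻¹ l ↔ k = l := fun k l => (Equiv.injective _).eq_iff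
  rw [cut, cut, Sym2.eq, Sym2.rel_iff'] at h
  simp only [Prod.mk.injEq, Prod.swap_prod_mk, e, Fin.ext_iff] at h
  rw [ix_val hn (by omega), ix_val hn (by omega), ix_val hn (by omega), ix_val hn (by omega)] at h
  omega

lemma card_block1 (σ : Equiv.Perm (Fin n)) {i : ℕ} (hi : i < n) :
    (univ.filter fun u : Fin n => (σ u : ℕ) ≤ i).card = i + 1 := by
  rw [← Finset.card_range (i+1)]
  apply Finset.card_bij' (fun u _ => (σ u : ℕ)) (fun j hj => σ⁻¹ ⟨j, by
    simp only [mem_range] at hj; omega⟩)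
  case hi =>
    intro u hu
    exact Finset.mem_range.mpr (by have := (Finset.mem_filter.mp hu).2; omega)
  case hj =>
    intro j hj
    simp only [Finset.mem_filter, Finset.mem_univ, true_and, Equiv.Perm.inv_def, Equiv.apply_symm_apply]
    exact Nat.lt_succ_iff.mp (Finset.mem_range.mp hj)
  case left_inv =>
    intro u hu
    simp only [Fin.eta, Equiv.Perm.inv_def, Equiv.symm_apply_apply]
  case right_inv =>
    intro j hj
    simp only [Equiv.Perm.inv_def, Equiv.apply_symm_apply]

lemma card_block2 (σ : Equiv.Perm (Fin n)) {i : ℕ} (hi : i < n) :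
    (univ.filter fun u : Fin n => ¬(σ u : ℕ) ≤ i).card = n - (i + 1) := by
  have h := Finset.card_filter_add_card_filter_not
    (s := (univ : Finset (Fin n))) (p := fun u => (σ u : ℕ) ≤ i)
  rw [card_block1 σ hi, Finset.card_univ, Fintype.card_fin] at h
  omega

lemma ham_w_ge (hn : 0 < n) (σ : Equiv.Perm (Fin n)) {i m' : ℕ} (hi : i + 1 < n)
    {a b c d : Bool}
    (h : (a ≠ c ∧ m' ≤ i + 1) ∨ (b ≠ d ∧ m' ≤ n - (i + 1))) :
    (m' : ℝ) ≤ (hammingDist (w σ i a b) (w σ i c d) : ℕ) := by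
  have key : ∀ (P : Fin n → Bool → Prop) (s : Finset (Fin n)),
      (∀ u ∈ s, w σ i a b u ≠ w σ i c d u) →
      s.card ≤ hammingDist (w σ i a b) (w σ i c d) := by
    intro _ s hs
    exact Finset.card_le_card (fun u hu => by
      simp only [hammingDist, mem_filter, mem_univ, true_and]; exact hs u hu)
  rcases h with ⟨hne, hm⟩ | ⟨hne, hm⟩
  · have hc := key (fun _ _ => True) (univ.filter fun u : Fin n => (σ u : ℕ) ≤ i) ?_
    · rw [card_block1 σ (by omega)] at hc
      exact_mod_cast le_trans (Nat.cast_le.mpr hm) (Nat.cast_le.mpr hc)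
    · intro u hu
      simp only [mem_filter, mem_univ, true_and] at hu
      simp only [w, if_pos hu]
      cases a <;> cases c <;> cases par ((σ u : Fin n) : ℕ) <;> simp_all
  · have hc := key (fun _ _ => True) (univ.filter fun u : Fin n => ¬(σ u : ℕ) ≤ i) ?_
    · rw [card_block2 σ (by omega)] at hc
      exact_mod_cast le_trans (Nat.cast_le.mpr hm) (Nat.cast_le.mpr hc)
    · intro u hu
      simp only [mem_filter, mem_univ, true_and] at hu
      simp only [w, if_neg hu]
      cases b <;> cases d <;> cases par ((σ u : Fin n) : ℕ) <;> simp_all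

lemma w_inj (hn : 0 < n) (σ : Equiv.Perm (Fin n)) {i : ℕ} (hi : i + 1 < n) {a b c d : Bool}
    (h : w σ i a b = w σ i c d) : a = c ∧ b = d := by
  have hvi0 : ((ix hn 0 : Fin n) : ℕ) = 0 := ix_val hn hn
  have hvi1 : ((ix hn (i+1) : Fin n) : ℕ) = i + 1 := ix_val hn hi
  constructor
  · have h0 := congrFun h (σ⁻¹ (ix hn 0))
    simp only [w, Equiv.Perm.inv_def, Equiv.apply_symm_apply, hvi0, if_pos (Nat.zero_le i)] at h0
    cases a <;> cases c <;> cases par 0 <;> simp_all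
  · have h1 := congrFun h (σ⁻¹ (ix hn (i+1)))
    simp only [w, Equiv.Perm.inv_def, Equiv.apply_symm_apply, hvi1, if_neg (by omega : ¬ i + 1 ≤ i)] at h1
    cases b <;> cases d <;> cases par (i+1) <;> simp_all

end S17

namespace S17
open Finset

lemma le_dEM {X : Type*} [Fintype X] (c : X → X → ℝ) (μ ν : X → ℝ)
    (hμ0 : ∀ x, 0 ≤ μ x) (hν0 : ∀ x, 0 ≤ ν x) (hμ1 : ∑ x, μ x = 1) (hν1 : ∑ x, ν x = 1)
    (L : ℝ)
    (h : ∀ π : X → X → ℝ, (∀ x y, 0 ≤ π x y) → (∀ x, ∑ y, π x y = μ x) →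
      (∀ y, ∑ x, π x y = ν y) → L ≤ ∑ x, ∑ y, c x y * π x y) :
    L ≤ dEM c μ ν := by
  apply le_csInf
  · refine ⟨∑ x, ∑ y, c x y * (μ x * ν y), fun x y => μ x * ν y,
      fun x y => mul_nonneg (hμ0 x) (hν0 y), ?_, ?_, rfl⟩
    · intro x; rw [← Finset.mul_sum, hν1, mul_one]
    · intro y; rw [← Finset.sum_mul, hμ1, one_mul]
  · rintro r ⟨π, h0, h1, h2, rfl⟩
    exact h π h0 h1 h2

lemma dEM_nonneg {X : Type*} [Fintype X] (c : X → X → ℝ) (μ ν : X → ℝ)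
    (hc : ∀ x y, 0 ≤ c x y)
    (hμ0 : ∀ x, 0 ≤ μ x) (hν0 : ∀ x, 0 ≤ ν x) (hμ1 : ∑ x, μ x = 1) (hν1 : ∑ x, ν x = 1) :
    0 ≤ dEM c μ ν := by
  apply le_dEM c μ ν hμ0 hν0 hμ1 hν1
  intro π h0 _ _
  exact Finset.sum_nonneg fun x _ => Finset.sum_nonneg fun y _ =>
    mul_nonneg (hc x y) (h0 x y)

lemma mass_le_dEM {X : Type*} [Fintype X] [DecidableEq X] (c : X → X → ℝ) (μ ν : X → ℝ)
    (hc : ∀ x y, 0 ≤ c x y)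
    (hμ0 : ∀ x, 0 ≤ μ x) (hν0 : ∀ x, 0 ≤ ν x) (hμ1 : ∑ x, μ x = 1) (hν1 : ∑ x, ν x = 1)
    (T : Finset X) (L : ℝ) (hL : 0 ≤ L)
    (hbound : ∀ f, 0 < μ f → ∀ g ∈ T, L ≤ c f g) :
    L * ∑ g ∈ T, ν g ≤ dEM c μ ν := by
  apply le_dEM c μ ν hμ0 hν0 hμ1 hν1
  intro π h0 h1 h2
  have step1 : ∀ x : X, ∑ g ∈ T, L * π x g ≤ ∑ y, c x y * π x y := by
    intro x
    have sub : ∑ g ∈ T, c x g * π x g ≤ ∑ y, c x y * π x y :=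
      Finset.sum_le_sum_of_subset_of_nonneg (Finset.subset_univ T)
        (fun y _ _ => mul_nonneg (hc x y) (h0 x y))
    refine le_trans (Finset.sum_le_sum ?_) sub
    intro g hg
    by_cases hx : 0 < μ x
    · exact mul_le_mul_of_nonneg_right (hbound x hx g hg) (h0 x g)
    · have hx0 : μ x = 0 := le_antisymm (not_lt.mp hx) (hμ0 x)
      have : ∀ y ∈ (Finset.univ : Finset X), π x y = 0 := by
        rw [← Finset.sum_eq_zero_iff_of_nonneg (fun y _ => h0 x y)]
        rw [h1 x, hx0]
      rw [this g (Finset.mem_univ g), mul_zero, mul_zero]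
  calc L * ∑ g ∈ T, ν g = ∑ g ∈ T, L * ν g := by rw [Finset.mul_sum]
    _ = ∑ g ∈ T, ∑ x, L * π x g := by
        refine Finset.sum_congr rfl fun g _ => ?_
        rw [← Finset.mul_sum, h2 g]
    _ = ∑ x, ∑ g ∈ T, L * π x g := Finset.sum_comm
    _ ≤ ∑ x, ∑ y, c x y * π x y := Finset.sum_le_sum fun x _ => step1 x

end S17

namespace S17

noncomputable def Dsens {n : ℕ} (A : SimpleGraph (Fin n) → (Fin n → Bool) → ℝ)
    (hn : 0 < n) (σ : Equiv.Perm (Fin n)) (i : ℕ) : ℝ :=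
  dEM (fun f g : Fin n → Bool => (hammingDist f g : ℝ)) (A (pg σ)) (A (qg hn σ i))

end S17


open scoped Classical in
/-- Every randomized algorithm for the 2-coloring problem has average sensitivity
`Ω(n)`: for all sufficiently large `n` divisible by `16` and every `β < 1/256`,
there is no randomized algorithm (given by output pmfs `A G` over colorings
`Fin n → Bool`) that outputs a proper 2-coloring on every 2-colorable graph and has
average sensitivity at most `β·n` (earth mover's distance with Hamming ground metric,
averaged over a uniformly random removed edge) on every `n`-vertex path. -/
theorem stmt17 : ∃ n₀ : ℕ, ∀ n : ℕ, n₀ ≤ n → 16 ∣ n → ∀ β : ℝ, β < 1 / 256 →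
    ¬ ∃ A : SimpleGraph (Fin n) → (Fin n → Bool) → ℝ,
      (∀ G f, 0 ≤ A G f) ∧ (∀ G : SimpleGraph (Fin n), ∑ f, A G f = 1) ∧
      (∀ G : SimpleGraph (Fin n), G.Colorable 2 → ∀ f, 0 < A G f →
        ∀ u v : Fin n, G.Adj u v → f u ≠ f v) ∧
      (∀ G : SimpleGraph (Fin n), IsPathGraph G →
        (∑ e ∈ G.edgeFinset,
            dEM (fun f g : Fin n → Bool => (hammingDist f g : ℝ))
              (A G) (A (G.deleteEdges {e}))) / (G.edgeFinset.card : ℝ) ≤ β * n) := by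
  refine ⟨256, ?_⟩
  intro n hn256 hdvd β hβ
  rintro ⟨A, hA0, hA1, hAprop, hAsens⟩
  classical
  obtain ⟨m, hnm⟩ := hdvd
  have hm16 : 16 ≤ m := by omega
  have hn0 : 0 < n := by omega
  set B : ℝ := max β (1/1024) with hBdef
  have hB0 : (0:ℝ) < B := lt_of_lt_of_le (by norm_num) (le_max_right _ _)
  have hB256 : B < 1/256 := max_lt hβ (by norm_num)
  have hn1R : (0:ℝ) < ((n-1 : ℕ) : ℝ) := by
    have h : 0 < n - 1 := by omega
    exact_mod_cast h
  -- sensitivity bound per permutation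
  have sum_bound : ∀ σ : Equiv.Perm (Fin n),
      ∑ i ∈ Finset.range (n-1), S17.Dsens A hn0 σ i ≤ B * n * ((n-1:ℕ) : ℝ) := by
    intro σ
    have hpath := hAsens (S17.pg σ) (S17.isPathGraph_pg σ)
    have hinj : ∀ x ∈ Finset.range (n-1), ∀ y ∈ Finset.range (n-1),
        S17.cut hn0 σ x = S17.cut hn0 σ y → x = y := fun x hx y hy h =>
      S17.cut_injOn hn0 σ (Finset.mem_range.mp hx) (Finset.mem_range.mp hy) h
    rw [S17.edge_enum hn0 σ, Finset.sum_image hinj,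
      Finset.card_image_of_injOn
        (fun x hx y hy h => hinj x (Finset.mem_coe.mp hx) y (Finset.mem_coe.mp hy) h),
      Finset.card_range, div_le_iff₀ hn1R] at hpath
    calc ∑ i ∈ Finset.range (n-1), S17.Dsens A hn0 σ i
        = ∑ i ∈ Finset.range (n-1),
            dEM (fun f g : Fin n → Bool => (hammingDist f g : ℝ))
              (A (S17.pg σ)) (A ((S17.pg σ).deleteEdges {S17.cut hn0 σ i})) := rfl
      _ ≤ β * n * ((n-1:ℕ) : ℝ) := hpath
      _ ≤ B * n * ((n-1:ℕ) : ℝ) := by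
          have hb : β ≤ B := le_max_left _ _
          have h1 : (0:ℝ) ≤ (n:ℝ) := Nat.cast_nonneg n
          have h2 : (0:ℝ) ≤ ((n-1:ℕ):ℝ) := le_of_lt hn1R
          exact mul_le_mul_of_nonneg_right (mul_le_mul_of_nonneg_right hb h1) h2
  have Dnn : ∀ (σ : Equiv.Perm (Fin n)) (i : ℕ), 0 ≤ S17.Dsens A hn0 σ i := fun σ i =>
    S17.dEM_nonneg _ _ _ (fun f g => Nat.cast_nonneg _) (hA0 _) (hA0 _) (hA1 _) (hA1 _)
  -- the heavy odd positions
  set H : Finset ℕ :=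
    (Finset.range (n-1)).filter (fun i => i % 2 = 1 ∧ m ≤ i + 1 ∧ i + 1 ≤ n - m) with hHdef
  have hHsub : H ⊆ Finset.range (n-1) := Finset.filter_subset _ _
  have hHcard : 7*m - 8 ≤ H.card := by
    have h : (Finset.range (7*m-8)).card ≤ H.card := by
      apply Finset.card_le_card_of_injOn (fun j => 2*j + 2*(m/2) + 1)
      · intro j hj
        rw [Finset.coe_range, Set.mem_Iio] at hj
        rw [Finset.mem_coe, hHdef, Finset.mem_filter, Finset.mem_range]
        dsimp only
        omega
      · intro x hx y hy hxy
        simp only [Finset.coe_range, Set.mem_Iio] at hx hy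
        dsimp only at hxy
        omega
    rwa [Finset.card_range] at h
  -- Markov: few bad positions per permutation
  have markov : ∀ σ : Equiv.Perm (Fin n),
      (H.filter (fun i => 8*B*(n:ℝ) < S17.Dsens A hn0 σ i)).card * 8 ≤ n - 1 := by
    intro σ
    have h1 : ((H.filter (fun i => 8*B*(n:ℝ) < S17.Dsens A hn0 σ i)).card : ℝ) * (8*B*n) ≤
        ∑ i ∈ H.filter (fun i => 8*B*(n:ℝ) < S17.Dsens A hn0 σ i), S17.Dsens A hn0 σ i := by
      rw [← nsmul_eq_mul]
      exact Finset.card_nsmul_le_sum _ _ _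
        (fun i hi => le_of_lt (Finset.mem_filter.mp hi).2)
    have h2 : ∑ i ∈ H.filter (fun i => 8*B*(n:ℝ) < S17.Dsens A hn0 σ i), S17.Dsens A hn0 σ i ≤
        ∑ i ∈ Finset.range (n-1), S17.Dsens A hn0 σ i :=
      Finset.sum_le_sum_of_subset_of_nonneg
        (le_trans (Finset.filter_subset _ _) hHsub) (fun i _ _ => Dnn σ i)
    have h3 := sum_bound σ
    have hBn : (0:ℝ) < B * (n:ℝ) := mul_pos hB0 (by exact_mod_cast hn0)
    have h4 : ((H.filter (fun i => 8*B*(n:ℝ) < S17.Dsens A hn0 σ i)).card : ℝ) * 8 * (B*n) ≤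
        ((n-1:ℕ):ℝ) * (B*n) := by nlinarith
    have h5 := le_of_mul_le_mul_right h4 hBn
    exact_mod_cast h5
  -- find a doubly-intimate pair
  have main : ∃ σ : Equiv.Perm (Fin n), ∃ i ∈ H,
      S17.Dsens A hn0 σ i ≤ 8*B*(n:ℝ) ∧
      S17.Dsens A hn0 (S17.ρ hn0 i * σ) i ≤ 8*B*(n:ℝ) := by
    by_contra hcon
    push_neg at hcon
    have per : ∀ σ : Equiv.Perm (Fin n), H.card ≤
        (H.filter (fun i => 8*B*(n:ℝ) < S17.Dsens A hn0 σ i)).card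
        + ∑ i ∈ H, (if 8*B*(n:ℝ) < S17.Dsens A hn0 (S17.ρ hn0 i * σ) i then 1 else 0) := by
      intro σ
      have hle : ∀ i ∈ H, (1:ℕ) ≤ (if 8*B*(n:ℝ) < S17.Dsens A hn0 σ i then 1 else 0) +
          (if 8*B*(n:ℝ) < S17.Dsens A hn0 (S17.ρ hn0 i * σ) i then 1 else 0) := by
        intro i hi
        by_cases h : 8*B*(n:ℝ) < S17.Dsens A hn0 σ i
        · rw [if_pos h]; exact Nat.le_add_right 1 _
        · rw [if_neg h, if_pos (hcon σ i hi (not_lt.mp h))]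
      calc H.card = ∑ _i ∈ H, (1:ℕ) := Finset.card_eq_sum_ones H
        _ ≤ ∑ i ∈ H, ((if 8*B*(n:ℝ) < S17.Dsens A hn0 σ i then 1 else 0) +
            (if 8*B*(n:ℝ) < S17.Dsens A hn0 (S17.ρ hn0 i * σ) i then 1 else 0)) :=
          Finset.sum_le_sum hle
        _ = (∑ i ∈ H, if 8*B*(n:ℝ) < S17.Dsens A hn0 σ i then 1 else 0) +
            ∑ i ∈ H, (if 8*B*(n:ℝ) < S17.Dsens A hn0 (S17.ρ hn0 i * σ) i then 1 else 0) :=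
          Finset.sum_add_distrib
        _ = (H.filter (fun i => 8*B*(n:ℝ) < S17.Dsens A hn0 σ i)).card
            + ∑ i ∈ H, (if 8*B*(n:ℝ) < S17.Dsens A hn0 (S17.ρ hn0 i * σ) i then 1 else 0) := by
          rw [Finset.card_filter]
    have sumper := Finset.sum_le_sum (fun (σ : Equiv.Perm (Fin n)) (_ : σ ∈ Finset.univ) => per σ)
    rw [Finset.sum_const, smul_eq_mul, Finset.sum_add_distrib] at sumper
    have swap : ∑ σ : Equiv.Perm (Fin n), ∑ i ∈ H,
          (if 8*B*(n:ℝ) < S17.Dsens A hn0 (S17.ρ hn0 i * σ) i then 1 else 0)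
        = ∑ σ : Equiv.Perm (Fin n), ∑ i ∈ H,
          (if 8*B*(n:ℝ) < S17.Dsens A hn0 σ i then 1 else 0) := by
      rw [Finset.sum_comm]
      conv_rhs => rw [Finset.sum_comm]
      refine Finset.sum_congr rfl fun i _ => ?_
      exact Fintype.sum_bijective _ (Group.mulLeft_bijective (S17.ρ hn0 i)) _ _ (fun σ => rfl)
    rw [swap] at sumper
    have filt : ∀ σ : Equiv.Perm (Fin n),
        ∑ i ∈ H, (if 8*B*(n:ℝ) < S17.Dsens A hn0 σ i then 1 else 0)
        = (H.filter (fun i => 8*B*(n:ℝ) < S17.Dsens A hn0 σ i)).card :=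
      fun σ => (Finset.card_filter _ _).symm
    simp only [filt] at sumper
    -- now pure counting
    set N := Fintype.card (Equiv.Perm (Fin n)) with hN
    have hNpos : 0 < N := Fintype.card_pos
    set SK := ∑ σ : Equiv.Perm (Fin n),
      (H.filter (fun i => 8*B*(n:ℝ) < S17.Dsens A hn0 σ i)).card with hSK
    have hKsum : SK * 8 ≤ N * (n-1) := by
      rw [hSK, Finset.sum_mul]
      calc ∑ σ : Equiv.Perm (Fin n),
            (H.filter (fun i => 8*B*(n:ℝ) < S17.Dsens A hn0 σ i)).card * 8
          ≤ ∑ _σ : Equiv.Perm (Fin n), (n-1) := Finset.sum_le_sum (fun σ _ => markov σ)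
        _ = N * (n-1) := by rw [Finset.sum_const, smul_eq_mul, Finset.card_univ]
    rw [Finset.card_univ, ← hN] at sumper
    -- sumper : N * H.card ≤ SK + SK
    have st3 : N * (7*m-8) ≤ N * H.card := Nat.mul_le_mul_left _ hHcard
    have st4 : N * (4*(7*m-8)) ≤ N * (n-1) := by
      calc N * (4*(7*m-8)) = 4*(N*(7*m-8)) := by ring
        _ ≤ 4*(N*H.card) := Nat.mul_le_mul_left _ st3
        _ ≤ 4*(SK+SK) := Nat.mul_le_mul_left _ sumper
        _ = SK * 8 := by ring
        _ ≤ N * (n-1) := hKsum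
    have st5 : 4*(7*m-8) ≤ n-1 := Nat.le_of_mul_le_mul_left st4 hNpos
    omega
  -- use the good pair
  obtain ⟨σ, i, hiH, hg1, hg2⟩ := main
  rw [hHdef, Finset.mem_filter, Finset.mem_range] at hiH
  have hilt := hiH.1
  have hiodd := hiH.2.1
  have him1 := hiH.2.2.1
  have him2 := hiH.2.2.2
  have hi1 : i + 1 < n := by omega
  have hodd : (n + i) % 2 = 1 := by omega
  have hQeq : S17.qg hn0 (S17.ρ hn0 i * σ) i = S17.qg hn0 σ i := S17.qg_rho hn0 σ hi1
  -- support structure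
  have hsQ : ∀ f, 0 < A (S17.qg hn0 σ i) f → ∃ a b, f = S17.w σ i a b := fun f hf =>
    S17.qg_coloring hn0 σ hi1 f
      (fun u v h => hAprop _ (S17.qg_colorable hn0 σ i) f hf u v h)
  have hs1 : ∀ f, 0 < A (S17.pg σ) f → ∃ a, f = S17.w σ i a a := fun f hf =>
    S17.pg_coloring hn0 σ hi1 f
      (fun u v h => hAprop _ (S17.pg_colorable σ) f hf u v h)
  have hs2 : ∀ f, 0 < A (S17.pg (S17.ρ hn0 i * σ)) f → ∃ a, f = S17.w σ i a (!a) := by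
    intro f hf
    obtain ⟨a, ha⟩ := S17.pg_coloring hn0 (S17.ρ hn0 i * σ) hi1 f
      (fun u v h => hAprop _ (S17.pg_colorable _) f hf u v h)
    exact ⟨a, by rw [ha, S17.w_rho hn0 σ hi1 hodd]⟩
  set T1 : Finset (Fin n → Bool) := {S17.w σ i true false, S17.w σ i false true} with hT1
  set T2 : Finset (Fin n → Bool) := {S17.w σ i true true, S17.w σ i false false} with hT2
  have hmR : (0:ℝ) ≤ (m:ℝ) := Nat.cast_nonneg m
  have hm1 : m ≤ i + 1 := him1
  have hm2 : m ≤ n - (i+1) := by omega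
  -- mass bounds
  have mb1 : (m:ℝ) * ∑ g ∈ T1, A (S17.qg hn0 σ i) g ≤ S17.Dsens A hn0 σ i := by
    unfold S17.Dsens
    apply S17.mass_le_dEM _ _ _ (fun f g => Nat.cast_nonneg _)
      (hA0 _) (hA0 _) (hA1 _) (hA1 _) T1 (m:ℝ) hmR
    intro f hf g hg
    obtain ⟨a, rfl⟩ := hs1 f hf
    rw [hT1, Finset.mem_insert, Finset.mem_singleton] at hg
    rcases hg with rfl | rfl
    · apply S17.ham_w_ge hn0 σ hi1
      cases a
      · exact Or.inl ⟨by simp, hm1⟩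
      · exact Or.inr ⟨by simp, hm2⟩
    · apply S17.ham_w_ge hn0 σ hi1
      cases a
      · exact Or.inr ⟨by simp, hm2⟩
      · exact Or.inl ⟨by simp, hm1⟩
  have mb2 : (m:ℝ) * ∑ g ∈ T2, A (S17.qg hn0 σ i) g ≤
      S17.Dsens A hn0 (S17.ρ hn0 i * σ) i := by
    unfold S17.Dsens
    rw [hQeq]
    apply S17.mass_le_dEM _ _ _ (fun f g => Nat.cast_nonneg _)
      (hA0 _) (hA0 _) (hA1 _) (hA1 _) T2 (m:ℝ) hmR
    intro f hf g hg
    obtain ⟨a, rfl⟩ := hs2 f hf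
    rw [hT2, Finset.mem_insert, Finset.mem_singleton] at hg
    rcases hg with rfl | rfl
    · apply S17.ham_w_ge hn0 σ hi1
      cases a
      · exact Or.inl ⟨by simp, hm1⟩
      · exact Or.inr ⟨by simp, hm2⟩
    · apply S17.ham_w_ge hn0 σ hi1
      cases a
      · exact Or.inr ⟨by simp, hm2⟩
      · exact Or.inl ⟨by simp, hm1⟩
  -- total mass 1
  have husub : ∀ f ∈ Finset.univ, f ∉ T1 ∪ T2 → A (S17.qg hn0 σ i) f = 0 := by
    intro f _ hf
    by_contra hne
    have hpos : 0 < A (S17.qg hn0 σ i) f := lt_of_le_of_ne (hA0 _ f) (Ne.symm hne)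
    obtain ⟨a, b, rfl⟩ := hsQ f hpos
    apply hf
    rw [Finset.mem_union, hT1, hT2]
    cases a <;> cases b <;> simp
  have hsum1 : ∑ g ∈ T1 ∪ T2, A (S17.qg hn0 σ i) g = 1 := by
    rw [← hA1 (S17.qg hn0 σ i)]
    exact (Finset.sum_subset (Finset.subset_univ _) husub).symm ▸ rfl
  have hdisj : Disjoint T1 T2 := by
    rw [Finset.disjoint_left]
    intro f h1 h2
    rw [hT1, Finset.mem_insert, Finset.mem_singleton] at h1
    rw [hT2, Finset.mem_insert, Finset.mem_singleton] at h2
    rcases h1 with rfl | rfl <;> rcases h2 with h | h <;>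
      · have hw := S17.w_inj hn0 σ hi1 h
        simp at hw
  have hsplit : (∑ g ∈ T1, A (S17.qg hn0 σ i) g) + ∑ g ∈ T2, A (S17.qg hn0 σ i) g = 1 := by
    rw [← Finset.sum_union hdisj, hsum1]
  -- finish
  have hD1 : S17.Dsens A hn0 σ i ≤ 8*B*(n:ℝ) := hg1
  have hD2 : S17.Dsens A hn0 (S17.ρ hn0 i * σ) i ≤ 8*B*(n:ℝ) := hg2
  have hcast : (n:ℝ) = 16*(m:ℝ) := by exact_mod_cast congrArg (Nat.cast : ℕ → ℝ) hnm
  have hmpos : (0:ℝ) < (m:ℝ) := by exact_mod_cast (by omega : 0 < m)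
  have hfin : (m:ℝ) ≤ 16*B*(n:ℝ) := by
    have hadd := add_le_add (le_trans mb1 hD1) (le_trans mb2 hD2)
    rw [← mul_add, hsplit, mul_one] at hadd
    linarith
  rw [hcast] at hfin
  nlinarith [hB256, hmpos, hfin]
end

section
/- Locality implies low average sensitivity: let A be a randomized algorithm outputting a subset of the edges of the input graph, using random string π ∈ {0,1}^{r(n)}. Suppose for each edge e and string π, a local procedure determines membership of e in A's output on G with randomness π by querying a set Q_{e,π} ⊆ E of edges, such that the output-membership of e is unchanged when deleting any edge e' ∉ Q_{e,π} (i.e., e is in A(G,π) iff e is in A(G−e',π)). If E_{π}E_{e∈E}[|Q_{e,π}|] ≤ q(G), then E_{e'∈E}[d_EM(A(G), A(G−e'))] ≤ q(G). -/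
open Finset

lemma dEM_le_avg {X : Type*} [Fintype X] [DecidableEq X] (c : X → X → ℝ)
    (hc : ∀ x y, 0 ≤ c x y) {r : ℕ} (f g : (Fin r → Bool) → X) :
    dEM c (fun T => ((Finset.univ.filter fun π => f π = T).card : ℝ) / 2 ^ r)
        (fun T => ((Finset.univ.filter fun π => g π = T).card : ℝ) / 2 ^ r)
      ≤ (∑ π : Fin r → Bool, c (f π) (g π)) / 2 ^ r := by
  have hcard : ∀ (p : (Fin r → Bool) → Prop) [DecidablePred p],
      ((Finset.univ.filter p).card : ℝ) = ∑ π : Fin r → Bool, if p π then (1:ℝ) else 0 := by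
    intro p _
    rw [Finset.card_filter]
    push_cast
    rfl
  apply csInf_le
  · refine ⟨0, ?_⟩
    rintro x ⟨K, h0, -, -, rfl⟩
    exact Finset.sum_nonneg fun _ _ => Finset.sum_nonneg fun _ _ =>
      mul_nonneg (hc _ _) (h0 _ _)
  · refine ⟨fun S T => ((Finset.univ.filter fun π => f π = S ∧ g π = T).card : ℝ) / 2 ^ r,
      fun S T => by positivity, ?_, ?_, ?_⟩
    · intro S
      rw [← Finset.sum_div]
      congr 1
      simp_rw [hcard]
      rw [Finset.sum_comm]
      refine Finset.sum_congr rfl fun π _ => ?_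
      by_cases h : f π = S <;> simp [h]
    · intro T
      rw [← Finset.sum_div]
      congr 1
      simp_rw [hcard]
      rw [Finset.sum_comm]
      refine Finset.sum_congr rfl fun π _ => ?_
      by_cases h : g π = T <;> simp [h]
    · simp_rw [hcard, ← mul_div_assoc, Finset.mul_sum, mul_ite, mul_one, mul_zero,
        ← Finset.sum_div]
      congr 1
      rw [show (∑ x : X, ∑ y : X, ∑ π : Fin r → Bool, if f π = x ∧ g π = y then c x y else 0)
          = ∑ x : X, ∑ π : Fin r → Bool, ∑ y : X, (if f π = x ∧ g π = y then c x y else 0)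
        from Finset.sum_congr rfl fun x _ => Finset.sum_comm, Finset.sum_comm]
      refine Finset.sum_congr rfl fun π _ => ?_
      rw [Finset.sum_eq_single (f π)]
      · rw [Finset.sum_eq_single (g π)]
        · simp
        · intro y _ hy; simp [hy.symm]
        · simp
      · intro x _ hx
        refine Finset.sum_eq_zero fun y _ => ?_
        simp [hx.symm]
      · simp

/-- Locality implies low average sensitivity: let `A` be a randomized algorithm
(graphs modelled by their edge sets `E ⊆ α`, randomness `π ∈ {0,1}^r`) outputting a
subset of the edges, and suppose a local procedure decides membership of `e` in the
output by querying only the edges `Q e π`, i.e. the membership of `e` is unchanged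
upon deleting any edge `e' ∉ Q e π`.  If the expected (over `π` and a uniform `e ∈ E`)
number of queries is at most `q`, then the average sensitivity of `A` (earth mover's
distance with symmetric-difference ground metric between the output distributions on
`E` and `E − e'`, averaged over a uniform `e' ∈ E`) is at most `q`. -/
theorem stmt19 {α : Type*} [DecidableEq α] [Fintype α] (r : ℕ)
    (A : Finset α → (Fin r → Bool) → Finset α)
    (Q : α → (Fin r → Bool) → Finset α)
    (E : Finset α) (hE : 1 ≤ E.card) (q : ℝ)
    (hsub : ∀ (S : Finset α) (π : Fin r → Bool), A S π ⊆ S)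
    (hloc : ∀ e ∈ E, ∀ π : Fin r → Bool, ∀ e' ∈ E, e' ∉ Q e π →
      (e ∈ A E π ↔ e ∈ A (E.erase e') π))
    (hq : (∑ π : Fin r → Bool, ∑ e ∈ E, ((Q e π).card : ℝ)) /
        ((2 ^ r : ℝ) * (E.card : ℝ)) ≤ q) :
    (∑ e' ∈ E, dEM (fun S T : Finset α => ((symmDiff S T).card : ℝ))
        (fun T => ((Finset.univ.filter fun π : Fin r → Bool => A E π = T).card : ℝ) / 2 ^ r)
        (fun T => ((Finset.univ.filter fun π : Fin r → Bool =>
          A (E.erase e') π = T).card : ℝ) / 2 ^ r)) / (E.card : ℝ) ≤ q := by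
  have hEpos : (0:ℝ) < E.card := by exact_mod_cast hE
  have h2 : (0:ℝ) < 2 ^ r := by positivity
  rw [div_le_iff₀ hEpos]
  have step1 : ∀ e' ∈ E, dEM (fun S T : Finset α => ((symmDiff S T).card : ℝ))
      (fun T => ((Finset.univ.filter fun π : Fin r → Bool => A E π = T).card : ℝ) / 2 ^ r)
      (fun T => ((Finset.univ.filter fun π : Fin r → Bool =>
          A (E.erase e') π = T).card : ℝ) / 2 ^ r)
      ≤ (∑ π : Fin r → Bool, ((E.filter fun e => e' ∈ Q e π).card : ℝ)) / 2 ^ r := by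
    intro e' he'
    refine le_trans (dEM_le_avg _ (fun x y => by positivity) (A E) (A (E.erase e'))) ?_
    refine (div_le_div_iff_of_pos_right h2).mpr (Finset.sum_le_sum fun π _ => ?_)
    have hss : symmDiff (A E π) (A (E.erase e') π) ⊆ E.filter fun e => e' ∈ Q e π := by
      intro e he
      rw [Finset.mem_symmDiff] at he
      have heE : e ∈ E := by
        rcases he with ⟨h1, _⟩ | ⟨h1, _⟩
        · exact hsub E π h1
        · exact E.erase_subset e' (hsub _ π h1)
      refine Finset.mem_filter.mpr ⟨heE, ?_⟩
      by_contra hqe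
      have := hloc e heE π e' he' hqe
      rcases he with ⟨h1, h2⟩ | ⟨h1, h2⟩ <;> tauto
    exact_mod_cast Finset.card_le_card hss
  calc (∑ e' ∈ E, dEM (fun S T : Finset α => ((symmDiff S T).card : ℝ))
        (fun T => ((Finset.univ.filter fun π : Fin r → Bool => A E π = T).card : ℝ) / 2 ^ r)
        (fun T => ((Finset.univ.filter fun π : Fin r → Bool =>
          A (E.erase e') π = T).card : ℝ) / 2 ^ r))
      ≤ ∑ e' ∈ E, (∑ π : Fin r → Bool, ((E.filter fun e => e' ∈ Q e π).card : ℝ)) / 2 ^ r :=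
        Finset.sum_le_sum step1
    _ = (∑ π : Fin r → Bool, ∑ e' ∈ E, ((E.filter fun e => e' ∈ Q e π).card : ℝ)) / 2 ^ r := by
        rw [← Finset.sum_div, Finset.sum_comm]
    _ ≤ (∑ π : Fin r → Bool, ∑ e ∈ E, ((Q e π).card : ℝ)) / 2 ^ r := by
        refine (div_le_div_iff_of_pos_right h2).mpr (Finset.sum_le_sum fun π _ => ?_)
        calc ∑ e' ∈ E, ((E.filter fun e => e' ∈ Q e π).card : ℝ)
            = ∑ e' ∈ E, ∑ e ∈ E, (if e' ∈ Q e π then (1:ℝ) else 0) := by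
              refine Finset.sum_congr rfl fun e' _ => ?_
              rw [Finset.card_filter]
              push_cast
              rfl
          _ = ∑ e ∈ E, ∑ e' ∈ E, (if e' ∈ Q e π then (1:ℝ) else 0) := Finset.sum_comm
          _ ≤ ∑ e ∈ E, ((Q e π).card : ℝ) := by
              refine Finset.sum_le_sum fun e _ => ?_
              have h1 : ∑ e' ∈ E, (if e' ∈ Q e π then (1:ℝ) else 0)
                  = ((E.filter fun e' => e' ∈ Q e π).card : ℝ) := by
                rw [Finset.card_filter]
                push_cast
                rfl
              rw [h1]
              have : (E.filter fun e' => e' ∈ Q e π) ⊆ Q e π :=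
                fun x hx => (Finset.mem_filter.mp hx).2
              exact_mod_cast Finset.card_le_card this
    _ ≤ q * E.card := by
        rw [div_le_iff₀ h2]
        calc (∑ π : Fin r → Bool, ∑ e ∈ E, ((Q e π).card : ℝ))
            ≤ q * ((2 ^ r : ℝ) * (E.card : ℝ)) := (div_le_iff₀ (mul_pos h2 hEpos)).mp hq
          _ = q * E.card * 2 ^ r := by ring
end
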